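/- arXiv:cs/0603059 — 4 statements merged into one kernel-verified Lean document; each statement's English description precedes it below -/
import Mathlib

section
/- Theorem 3.5: in the non-overlapping case f_1(p_0) < f_0(p_1), for every n ≥ 1 and every binary word (i_1,…,i_n) ∈ {0,1}^n, Q( I_{i_1⋯i_n} ) = p_{i_1⋯i_n}, i.e. the Blackwell measure of the interval I_{i_1⋯i_n} = f_{i_n}∘f_{i_{n−1}}∘⋯∘f_{i_1}(I) equals the probability of the output word (i_1,…,i_n). -/
open MeasureTheory

/-- `f_0(x) = ((1−ε)/ε)·(π_00 x + π_10)/(π_01 x + π_11)`. -/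
noncomputable def f₀ (π00 π01 π10 π11 ε : ℝ) (x : ℝ) : ℝ :=
  ((1 - ε) / ε) * ((π00 * x + π10) / (π01 * x + π11))

/-- `f_1(x) = (ε/(1−ε))·(π_00 x + π_10)/(π_01 x + π_11)`. -/
noncomputable def f₁ (π00 π01 π10 π11 ε : ℝ) (x : ℝ) : ℝ :=
  (ε / (1 - ε)) * ((π00 * x + π10) / (π01 * x + π11))

/-- `r_0(x) = (((1−ε)π_00 + επ_01)x + ((1−ε)π_10 + επ_11))/(x+1)`. -/
noncomputable def r₀ (π00 π01 π10 π11 ε : ℝ) (x : ℝ) : ℝ :=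
  (((1 - ε) * π00 + ε * π01) * x + ((1 - ε) * π10 + ε * π11)) / (x + 1)

/-- `r_1(x) = ((επ_00 + (1−ε)π_01)x + (επ_10 + (1−ε)π_11))/(x+1)`. -/
noncomputable def r₁ (π00 π01 π10 π11 ε : ℝ) (x : ℝ) : ℝ :=
  ((ε * π00 + (1 - ε) * π01) * x + (ε * π10 + (1 - ε) * π11)) / (x + 1)

/-- `f_b` for a binary symbol `b`. -/
noncomputable def fb (π00 π01 π10 π11 ε : ℝ) (b : Bool) : ℝ → ℝ :=
  if b then f₁ π00 π01 π10 π11 ε else f₀ π00 π01 π10 π11 ε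

/-- The support of a measure on `ℝ`: the set of points all of whose open neighborhoods
have positive measure (the smallest closed set of full measure). -/
def measSupp (Q : Measure ℝ) : Set ℝ :=
  {x : ℝ | ∀ U : Set ℝ, IsOpen U → x ∈ U → 0 < Q U}

/-- Blackwell's invariance equation
`Q(E) = ∫_{f_0^{−1}(E)} r_0 dQ + ∫_{f_1^{−1}(E)} r_1 dQ` for Borel `E ⊆ (0,∞)`. -/
def BlackwellInvariant (π00 π01 π10 π11 ε : ℝ) (Q : Measure ℝ) : Prop :=
  ∀ E : Set ℝ, MeasurableSet E → E ⊆ Set.Ioi (0 : ℝ) →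
    Q E = (∫⁻ x in f₀ π00 π01 π10 π11 ε ⁻¹' E, ENNReal.ofReal (r₀ π00 π01 π10 π11 ε x) ∂Q)
      + ∫⁻ x in f₁ π00 π01 π10 π11 ε ⁻¹' E, ENNReal.ofReal (r₁ π00 π01 π10 π11 ε x) ∂Q


/-- The pair `(a_n, b_n)` associated with a binary word, with
`a_k = p_E(i_k)(π_00 a_{k−1} + π_10 b_{k−1})`,
`b_k = p_E(1−i_k)(π_01 a_{k−1} + π_11 b_{k−1})`,
starting from the stationary distribution. (`false` codes `0` and `true` codes `1`,
so `p_E(false) = 1−ε` and `p_E(true) = ε`.) -/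
noncomputable def wordPQ (π00 π01 π10 π11 ε : ℝ) (w : List Bool) : ℝ × ℝ :=
  w.foldl
    (fun ab i =>
      ((if i then ε else 1 - ε) * (π00 * ab.1 + π10 * ab.2),
       (if i then 1 - ε else ε) * (π01 * ab.1 + π11 * ab.2)))
    (π10 / (π01 + π10), π01 / (π01 + π10))

/-- The probability `p_{i_1⋯i_n} = a_n + b_n` of the output word `(i_1,…,i_n)`. -/
noncomputable def wordP (π00 π01 π10 π11 ε : ℝ) (w : List Bool) : ℝ :=
  (wordPQ π00 π01 π10 π11 ε w).1 + (wordPQ π00 π01 π10 π11 ε w).2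

/-- The interval `I_{i_1⋯i_n} = f_{i_n}∘f_{i_{n−1}}∘⋯∘f_{i_1}(I)`. -/
noncomputable def wordInterval (π00 π01 π10 π11 ε p₀ p₁ : ℝ) (w : List Bool) : Set ℝ :=
  w.foldl (fun S i => fb π00 π01 π10 π11 ε i '' S) (Set.Icc p₁ p₀)

namespace BWProof

open Set

structure Hyp (π00 π01 π10 π11 ε p₀ p₁ : ℝ) : Prop where
  h00 : 0 < π00
  h01 : 0 < π01
  h10 : 0 < π10
  h11 : 0 < π11
  hrow0 : π00 + π01 = 1
  hrow1 : π10 + π11 = 1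
  hdet : 0 < π00 * π11 - π01 * π10
  hε0 : 0 < ε
  hε : ε < 1 / 2
  hp₀ : 0 < p₀
  hp₁ : 0 < p₁
  hfix₀ : f₀ π00 π01 π10 π11 ε p₀ = p₀
  hfix₁ : f₁ π00 π01 π10 π11 ε p₁ = p₁
  huniq₀ : ∀ q : ℝ, 0 < q → f₀ π00 π01 π10 π11 ε q = q → q = p₀
  huniq₁ : ∀ q : ℝ, 0 < q → f₁ π00 π01 π10 π11 ε q = q → q = p₁
  hnov : f₁ π00 π01 π10 π11 ε p₀ < f₀ π00 π01 π10 π11 ε p₁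

variable {π00 π01 π10 π11 ε p₀ p₁ : ℝ}

namespace Hyp

variable (S : Hyp π00 π01 π10 π11 ε p₀ p₁)
include S

lemma hε1 : 0 < 1 - ε := by have := S.hε; linarith

lemma hεlt : ε < 1 - ε := by have := S.hε; linarith

lemma Dpos {x : ℝ} (hx : 0 ≤ x) : 0 < π01 * x + π11 :=
  add_pos_of_nonneg_of_pos (mul_nonneg S.h01.le hx) S.h11

lemma Npos {x : ℝ} (hx : 0 ≤ x) : 0 < π00 * x + π10 :=
  add_pos_of_nonneg_of_pos (mul_nonneg S.h00.le hx) S.h10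

lemma f0_pos {x : ℝ} (hx : 0 ≤ x) : 0 < f₀ π00 π01 π10 π11 ε x :=
  mul_pos (div_pos S.hε1 S.hε0) (div_pos (S.Npos hx) (S.Dpos hx))

lemma f1_pos {x : ℝ} (hx : 0 ≤ x) : 0 < f₁ π00 π01 π10 π11 ε x :=
  mul_pos (div_pos S.hε0 S.hε1) (div_pos (S.Npos hx) (S.Dpos hx))

lemma ratio_mono {x y : ℝ} (hx : 0 ≤ x) (hxy : x < y) :
    (π00 * x + π10) / (π01 * x + π11) < (π00 * y + π10) / (π01 * y + π11) := by
  rw [div_lt_div_iff₀ (S.Dpos hx) (S.Dpos (hx.trans hxy.le))]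
  nlinarith [mul_pos (sub_pos.mpr hxy) S.hdet]

lemma f0_mono {x y : ℝ} (hx : 0 ≤ x) (hxy : x < y) :
    f₀ π00 π01 π10 π11 ε x < f₀ π00 π01 π10 π11 ε y :=
  mul_lt_mul_of_pos_left (S.ratio_mono hx hxy) (div_pos S.hε1 S.hε0)

lemma f1_mono {x y : ℝ} (hx : 0 ≤ x) (hxy : x < y) :
    f₁ π00 π01 π10 π11 ε x < f₁ π00 π01 π10 π11 ε y :=
  mul_lt_mul_of_pos_left (S.ratio_mono hx hxy) (div_pos S.hε0 S.hε1)

lemma f0_mono_le {x y : ℝ} (hx : 0 ≤ x) (hxy : x ≤ y) :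
    f₀ π00 π01 π10 π11 ε x ≤ f₀ π00 π01 π10 π11 ε y := by
  rcases eq_or_lt_of_le hxy with h | h
  · rw [h]
  · exact (S.f0_mono hx h).le

lemma f1_mono_le {x y : ℝ} (hx : 0 ≤ x) (hxy : x ≤ y) :
    f₁ π00 π01 π10 π11 ε x ≤ f₁ π00 π01 π10 π11 ε y := by
  rcases eq_or_lt_of_le hxy with h | h
  · rw [h]
  · exact (S.f1_mono hx h).le

lemma f1_lt_f0 {x : ℝ} (hx : 0 ≤ x) :
    f₁ π00 π01 π10 π11 ε x < f₀ π00 π01 π10 π11 ε x := by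
  have h1 : ε / (1 - ε) < (1 - ε) / ε := by
    rw [div_lt_div_iff₀ S.hε1 S.hε0]
    nlinarith [S.hεlt, S.hε0]
  exact mul_lt_mul_of_pos_right h1 (div_pos (S.Npos hx) (S.Dpos hx))

/-- upper bound for `f₀`. -/
lemma f0_lt_L0 {x : ℝ} (hx : 0 ≤ x) :
    f₀ π00 π01 π10 π11 ε x < (1 - ε) / ε * (π00 / π01) := by
  have : (π00 * x + π10) / (π01 * x + π11) < π00 / π01 := by
    rw [div_lt_div_iff₀ (S.Dpos hx) S.h01]
    nlinarith [S.hdet]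
  exact mul_lt_mul_of_pos_left this (div_pos S.hε1 S.hε0)

lemma f1_lt_L1 {x : ℝ} (hx : 0 ≤ x) :
    f₁ π00 π01 π10 π11 ε x < ε / (1 - ε) * (π00 / π01) := by
  have : (π00 * x + π10) / (π01 * x + π11) < π00 / π01 := by
    rw [div_lt_div_iff₀ (S.Dpos hx) S.h01]
    nlinarith [S.hdet]
  exact mul_lt_mul_of_pos_left this (div_pos S.hε0 S.hε1)

lemma f0_continuousOn : ContinuousOn (f₀ π00 π01 π10 π11 ε) (Set.Ici 0) := by
  apply ContinuousOn.mul continuousOn_const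
  exact ContinuousOn.div (by fun_prop) (by fun_prop)
    (fun x hx => (S.Dpos hx).ne')

lemma f1_continuousOn : ContinuousOn (f₁ π00 π01 π10 π11 ε) (Set.Ici 0) := by
  apply ContinuousOn.mul continuousOn_const
  exact ContinuousOn.div (by fun_prop) (by fun_prop)
    (fun x hx => (S.Dpos hx).ne')

end Hyp

end BWProof
namespace BWProof
namespace Hyp

variable {π00 π01 π10 π11 ε p₀ p₁ : ℝ}
variable (S : Hyp π00 π01 π10 π11 ε p₀ p₁)
include S

lemma g0_continuousOn {s : Set ℝ} (hs : s ⊆ Set.Ici 0) :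
    ContinuousOn (fun y => f₀ π00 π01 π10 π11 ε y - y) s :=
  ((S.f0_continuousOn.mono hs).sub (continuousOn_id))

lemma g1_continuousOn {s : Set ℝ} (hs : s ⊆ Set.Ici 0) :
    ContinuousOn (fun y => f₁ π00 π01 π10 π11 ε y - y) s :=
  ((S.f1_continuousOn.mono hs).sub (continuousOn_id))

lemma s0_below {x : ℝ} (hx : 0 ≤ x) (hxp : x < p₀) : x < f₀ π00 π01 π10 π11 ε x := by
  by_contra hcon
  push_neg at hcon
  rcases eq_or_lt_of_le hcon with h | h
  · have hx0 : 0 < x := by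
      rcases eq_or_lt_of_le hx with h0 | h0
      · exfalso; have := S.f0_pos (le_refl (0:ℝ)); rw [← h0] at h; linarith
      · exact h0
    exact absurd (S.huniq₀ x hx0 h) (ne_of_lt hxp)
  · -- f₀ x < x, x > 0
    have hx0 : 0 < x := lt_of_le_of_lt (S.f0_pos hx).le (by simpa using h)
    set g := fun y => f₀ π00 π01 π10 π11 ε y - y with hg
    have hcont : ContinuousOn g (Set.Icc 0 x) :=
      S.g0_continuousOn (Set.Icc_subset_Ici_self)
    have h0 : 0 < g 0 := by simpa [hg] using S.f0_pos (le_refl (0:ℝ))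
    have hx' : g x < 0 := by simpa [hg] using h
    have : (0:ℝ) ∈ Set.Ioo (g x) (g 0) := ⟨hx', h0⟩
    obtain ⟨y, hy, hgy⟩ := intermediate_value_Ioo' hx0.le hcont this
    have hy0 : 0 < y := hy.1
    have : y = p₀ := S.huniq₀ y hy0 (by simpa [hg, sub_eq_zero] using hgy)
    have : y < p₀ := lt_trans hy.2 hxp
    linarith
    
lemma s1_below {x : ℝ} (hx : 0 ≤ x) (hxp : x < p₁) : x < f₁ π00 π01 π10 π11 ε x := by
  by_contra hcon
  push_neg at hcon
  rcases eq_or_lt_of_le hcon with h | h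
  · have hx0 : 0 < x := by
      rcases eq_or_lt_of_le hx with h0 | h0
      · exfalso; have := S.f1_pos (le_refl (0:ℝ)); rw [← h0] at h; linarith
      · exact h0
    exact absurd (S.huniq₁ x hx0 h) (ne_of_lt hxp)
  · have hx0 : 0 < x := lt_of_le_of_lt (S.f1_pos hx).le (by simpa using h)
    set g := fun y => f₁ π00 π01 π10 π11 ε y - y with hg
    have hcont : ContinuousOn g (Set.Icc 0 x) :=
      S.g1_continuousOn (Set.Icc_subset_Ici_self)
    have h0 : 0 < g 0 := by simpa [hg] using S.f1_pos (le_refl (0:ℝ))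
    have hx' : g x < 0 := by simpa [hg] using h
    have : (0:ℝ) ∈ Set.Ioo (g x) (g 0) := ⟨hx', h0⟩
    obtain ⟨y, hy, hgy⟩ := intermediate_value_Ioo' hx0.le hcont this
    have : y = p₁ := S.huniq₁ y hy.1 (by simpa [hg, sub_eq_zero] using hgy)
    have : y < p₁ := lt_trans hy.2 hxp
    linarith

lemma s0_above {x : ℝ} (hxp : p₀ < x) : f₀ π00 π01 π10 π11 ε x < x := by
  have hx : 0 ≤ x := (S.hp₀.trans hxp).le
  by_contra hcon
  push_neg at hcon
  rcases eq_or_lt_of_le hcon with h | h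
  · exact absurd (S.huniq₀ x (S.hp₀.trans hxp) h.symm) (ne_of_gt hxp)
  · set L := (1 - ε) / ε * (π00 / π01) with hL
    set T := max x L + 1 with hT
    have hxT : x < T := by
      have := le_max_left x L; simp [hT]; linarith
    have hTpos : 0 ≤ T := by linarith
    set g := fun y => f₀ π00 π01 π10 π11 ε y - y with hg
    have hcont : ContinuousOn g (Set.Icc x T) := S.g0_continuousOn
      (fun y hy => le_trans hx hy.1)
    have hgx : 0 < g x := by simpa [hg] using h
    have hgT : g T < 0 := by
      have h1 : f₀ π00 π01 π10 π11 ε T < L := S.f0_lt_L0 hTpos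
      have h2 : L ≤ max x L := le_max_right x L
      simp only [hg]
      simp only [hT] at h1 ⊢
      linarith
    have : (0:ℝ) ∈ Set.Ioo (g T) (g x) := ⟨hgT, hgx⟩
    obtain ⟨y, hy, hgy⟩ := intermediate_value_Ioo' hxT.le hcont this
    have : y = p₀ := S.huniq₀ y (lt_trans (S.hp₀.trans hxp) hy.1)
      (by simpa [hg, sub_eq_zero] using hgy)
    have : p₀ < y := hxp.trans hy.1
    linarith

lemma s1_above {x : ℝ} (hxp : p₁ < x) : f₁ π00 π01 π10 π11 ε x < x := by
  have hx : 0 ≤ x := (S.hp₁.trans hxp).le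
  by_contra hcon
  push_neg at hcon
  rcases eq_or_lt_of_le hcon with h | h
  · exact absurd (S.huniq₁ x (S.hp₁.trans hxp) h.symm) (ne_of_gt hxp)
  · set L := ε / (1 - ε) * (π00 / π01) with hL
    set T := max x L + 1 with hT
    have hxT : x < T := by
      have := le_max_left x L; simp [hT]; linarith
    have hTpos : 0 ≤ T := by linarith
    set g := fun y => f₁ π00 π01 π10 π11 ε y - y with hg
    have hcont : ContinuousOn g (Set.Icc x T) := S.g1_continuousOn
      (fun y hy => le_trans hx hy.1)
    have hgx : 0 < g x := by simpa [hg] using h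
    have hgT : g T < 0 := by
      have h1 : f₁ π00 π01 π10 π11 ε T < L := S.f1_lt_L1 hTpos
      have h2 : L ≤ max x L := le_max_right x L
      simp only [hg]
      simp only [hT] at h1 ⊢
      linarith
    have : (0:ℝ) ∈ Set.Ioo (g T) (g x) := ⟨hgT, hgx⟩
    obtain ⟨y, hy, hgy⟩ := intermediate_value_Ioo' hxT.le hcont this
    have : y = p₁ := S.huniq₁ y (lt_trans (S.hp₁.trans hxp) hy.1)
      (by simpa [hg, sub_eq_zero] using hgy)
    have : p₁ < y := hxp.trans hy.1
    linarith

lemma p1_lt_p0 : p₁ < p₀ := by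
  have h1 : f₁ π00 π01 π10 π11 ε p₀ < p₀ := by
    have := S.f1_lt_f0 S.hp₀.le; rw [S.hfix₀] at this; exact this
  rcases lt_trichotomy p₁ p₀ with h | h | h
  · exact h
  · exfalso; rw [← h, S.hfix₁] at h1; exact lt_irrefl _ h1
  · exact absurd (S.s1_below S.hp₀.le h) (not_lt.mpr h1.le)

lemma f1p0_lt_p0 : f₁ π00 π01 π10 π11 ε p₀ < p₀ := S.s1_above S.p1_lt_p0

lemma p1_lt_f0p1 : p₁ < f₀ π00 π01 π10 π11 ε p₁ := S.s0_below S.hp₁.le S.p1_lt_p0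

lemma f0p1_le_p0 : f₀ π00 π01 π10 π11 ε p₁ ≤ p₀ := by
  have := S.f0_mono S.hp₁.le S.p1_lt_p0
  rw [S.hfix₀] at this; exact this.le

end Hyp
end BWProof
namespace BWProof

open Set MeasureTheory
open scoped ENNReal

variable {π00 π01 π10 π11 ε p₀ p₁ : ℝ}

lemma f0_measurable : Measurable (f₀ π00 π01 π10 π11 ε) := by
  unfold f₀; fun_prop

lemma f1_measurable : Measurable (f₁ π00 π01 π10 π11 ε) := by
  unfold f₁; fun_prop

lemma er0_measurable : Measurable (fun x => ENNReal.ofReal (r₀ π00 π01 π10 π11 ε x)) := by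
  unfold r₀; fun_prop

lemma er1_measurable : Measurable (fun x => ENNReal.ofReal (r₁ π00 π01 π10 π11 ε x)) := by
  unfold r₁; fun_prop

lemma eu1_measurable : Measurable (fun x : ℝ => ENNReal.ofReal (x / (x + 1))) := by fun_prop

lemma eu2_measurable : Measurable (fun x : ℝ => ENNReal.ofReal (1 / (x + 1))) := by fun_prop

namespace Hyp

variable (S : Hyp π00 π01 π10 π11 ε p₀ p₁)
include S

lemma r0_pos {x : ℝ} (hx : 0 ≤ x) : 0 < r₀ π00 π01 π10 π11 ε x := by
  unfold r₀
  apply div_pos _ (by linarith)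
  have h1 : 0 < (1 - ε) * π00 + ε * π01 := by nlinarith [S.hε1, S.hε0, S.h00, S.h01]
  have h2 : 0 < (1 - ε) * π10 + ε * π11 := by nlinarith [S.hε1, S.hε0, S.h10, S.h11]
  nlinarith [mul_nonneg h1.le hx]

lemma r1_pos {x : ℝ} (hx : 0 ≤ x) : 0 < r₁ π00 π01 π10 π11 ε x := by
  unfold r₁
  apply div_pos _ (by linarith)
  have h1 : 0 < ε * π00 + (1 - ε) * π01 := by nlinarith [S.hε1, S.hε0, S.h00, S.h01]
  have h2 : 0 < ε * π10 + (1 - ε) * π11 := by nlinarith [S.hε1, S.hε0, S.h10, S.h11]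
  nlinarith [mul_nonneg h1.le hx]

lemma er_sum {x : ℝ} (hx : 0 < x) :
    ENNReal.ofReal (r₀ π00 π01 π10 π11 ε x) + ENNReal.ofReal (r₁ π00 π01 π10 π11 ε x) = 1 := by
  rw [← ENNReal.ofReal_add (S.r0_pos hx.le).le (S.r1_pos hx.le).le]
  have : r₀ π00 π01 π10 π11 ε x + r₁ π00 π01 π10 π11 ε x = 1 := by
    unfold r₀ r₁
    rw [← add_div]
    rw [div_eq_one_iff_eq (by linarith : x + 1 ≠ 0)]
    have h0 := S.hrow0; have h1 := S.hrow1
    ring_nf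
    nlinarith [S.hrow0, S.hrow1]
  rw [this, ENNReal.ofReal_one]

end Hyp

section InvFun

variable (Q : Measure ℝ)

lemma inv_fun (hQinv : BlackwellInvariant π00 π01 π10 π11 ε Q)
    (g : ℝ → ℝ≥0∞) (hg : Measurable g) (hg0 : ∀ x : ℝ, x ≤ 0 → g x = 0) :
    ∫⁻ x, g x ∂Q
      = (∫⁻ x, g (f₀ π00 π01 π10 π11 ε x) * ENNReal.ofReal (r₀ π00 π01 π10 π11 ε x) ∂Q)
      + ∫⁻ x, g (f₁ π00 π01 π10 π11 ε x) * ENNReal.ofReal (r₁ π00 π01 π10 π11 ε x) ∂Q := by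
  set F0 := f₀ π00 π01 π10 π11 ε
  set F1 := f₁ π00 π01 π10 π11 ε
  set R0 := fun x => ENNReal.ofReal (r₀ π00 π01 π10 π11 ε x)
  set R1 := fun x => ENNReal.ofReal (r₁ π00 π01 π10 π11 ε x)
  have hF0 : Measurable F0 := f0_measurable
  have hF1 : Measurable F1 := f1_measurable
  have hR0 : Measurable R0 := er0_measurable
  have hR1 : Measurable R1 := er1_measurable
  set ν : Measure ℝ := (Q.withDensity R0).map F0 + (Q.withDensity R1).map F1 with hν
  have hQν : ∀ s : Set ℝ, MeasurableSet s → s ⊆ Set.Ioi 0 → Q s = ν s := by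
    intro s hs hsub
    rw [hQinv s hs hsub, hν]
    rw [Measure.add_apply, Measure.map_apply hF0 hs, Measure.map_apply hF1 hs,
      withDensity_apply _ (hF0 hs), withDensity_apply _ (hF1 hs)]
  have hres : Q.restrict (Set.Ioi 0) = ν.restrict (Set.Ioi 0) := by
    ext s hs
    rw [Measure.restrict_apply hs, Measure.restrict_apply hs]
    exact hQν _ (hs.inter measurableSet_Ioi) (fun x hx => hx.2)
  have hind : g = (Set.Ioi (0:ℝ)).indicator g := by
    funext x
    by_cases hx : x ∈ Set.Ioi (0:ℝ)
    · rw [Set.indicator_of_mem hx]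
    · rw [Set.indicator_of_notMem hx, hg0 x (by simpa using hx)]
  have key : ∫⁻ x, g x ∂Q = ∫⁻ x, g x ∂ν := by
    conv_lhs => rw [hind]
    conv_rhs => rw [hind]
    rw [lintegral_indicator measurableSet_Ioi, lintegral_indicator measurableSet_Ioi,
      hres]
  have e0 : ∫⁻ a, g (F0 a) ∂(Q.withDensity R0) = ∫⁻ x, R0 x * g (F0 x) ∂Q := by
    simpa [Function.comp] using lintegral_withDensity_eq_lintegral_mul Q hR0 (hg.comp hF0)
  have e1 : ∫⁻ a, g (F1 a) ∂(Q.withDensity R1) = ∫⁻ x, R1 x * g (F1 x) ∂Q := by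
    simpa [Function.comp] using lintegral_withDensity_eq_lintegral_mul Q hR1 (hg.comp hF1)
  rw [key, hν, lintegral_add_measure, lintegral_map hg hF0, lintegral_map hg hF1, e0, e1]
  congr 1
  · exact lintegral_congr (fun x => by rw [mul_comm])
  · exact lintegral_congr (fun x => by rw [mul_comm])

end InvFun

end BWProof
namespace BWProof

open Set

/-- inverse of `f₁` -/
noncomputable def phi1 (π00 π01 π10 π11 ε t : ℝ) : ℝ :=
  ((1 - ε) * π11 * t - ε * π10) / (ε * π00 - (1 - ε) * π01 * t)

/-- inverse of `f₀` -/
noncomputable def psi0 (π00 π01 π10 π11 ε t : ℝ) : ℝ :=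
  (ε * π11 * t - (1 - ε) * π10) / ((1 - ε) * π00 - ε * π01 * t)

namespace Hyp

variable {π00 π01 π10 π11 ε p₀ p₁ : ℝ}
variable (S : Hyp π00 π01 π10 π11 ε p₀ p₁)
include S

lemma f1_zero_lt_p0 : f₁ π00 π01 π10 π11 ε 0 < p₀ :=
  lt_trans (S.f1_mono le_rfl S.hp₀) S.f1p0_lt_p0

lemma f0_zero_lt_p1 : f₀ π00 π01 π10 π11 ε 0 < f₀ π00 π01 π10 π11 ε p₁ :=
  S.f0_mono le_rfl S.hp₁

lemma p0_lt_L0 : p₀ < (1 - ε) / ε * (π00 / π01) := by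
  have := S.f0_lt_L0 S.hp₀.le; rwa [S.hfix₀] at this

section phi1

variable {t : ℝ} (ht : p₀ ≤ t) (htL : t < ε / (1 - ε) * (π00 / π01))
include ht htL

lemma phi1_denom_pos : 0 < ε * π00 - (1 - ε) * π01 * t := by
  have h := htL
  rw [div_mul_div_comm, lt_div_iff₀ (mul_pos S.hε1 S.h01)] at h
  nlinarith

lemma phi1_num_pos : 0 < (1 - ε) * π11 * t - ε * π10 := by
  -- t ≥ p₀ > f₁ 0 = ε π10 / ((1-ε) π11)
  have h1 : f₁ π00 π01 π10 π11 ε 0 < t := lt_of_lt_of_le S.f1_zero_lt_p0 ht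
  have h2 : f₁ π00 π01 π10 π11 ε 0 = ε * π10 / ((1 - ε) * π11) := by
    unfold f₁; rw [div_mul_div_comm]; congr 1 <;> ring
  rw [h2, div_lt_iff₀ (mul_pos S.hε1 S.h11)] at h1
  nlinarith

lemma phi1_pos : 0 < phi1 π00 π01 π10 π11 ε t :=
  div_pos (S.phi1_num_pos ht htL) (S.phi1_denom_pos ht htL)

lemma f1_phi1 : f₁ π00 π01 π10 π11 ε (phi1 π00 π01 π10 π11 ε t) = t := by
  have hd := S.phi1_denom_pos ht htL
  have hdet := S.hdet
  have hε1 := S.hε1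
  have hε0 := S.hε0
  unfold f₁ phi1
  have e1 : π00 * (((1 - ε) * π11 * t - ε * π10) / (ε * π00 - (1 - ε) * π01 * t)) + π10
      = ((1 - ε) * t * (π00 * π11 - π01 * π10)) / (ε * π00 - (1 - ε) * π01 * t) := by
    rw [mul_div_assoc', div_add' _ _ _ hd.ne']
    congr 1
    ring
  have e2 : π01 * (((1 - ε) * π11 * t - ε * π10) / (ε * π00 - (1 - ε) * π01 * t)) + π11
      = (ε * (π00 * π11 - π01 * π10)) / (ε * π00 - (1 - ε) * π01 * t) := by
    rw [mul_div_assoc', div_add' _ _ _ hd.ne']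
    congr 1
    ring
  rw [e1, e2, div_div_div_comm, div_self hd.ne', div_one,
    mul_div_mul_right _ _ hdet.ne']
  field_simp

lemma f1_gt_iff {x : ℝ} (hx : 0 < x) :
    t < f₁ π00 π01 π10 π11 ε x ↔ phi1 π00 π01 π10 π11 ε t < x := by
  have hD := S.Dpos hx.le
  have hd := S.phi1_denom_pos ht htL
  unfold f₁ phi1
  rw [div_mul_div_comm, lt_div_iff₀ (mul_pos S.hε1 hD), div_lt_iff₀ hd]
  have key : t * ((1 - ε) * (π01 * x + π11)) - ε * (π00 * x + π10)
      = ((1 - ε) * π11 * t - ε * π10) - x * (ε * π00 - (1 - ε) * π01 * t) := by ring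
  constructor <;> intro h <;> linarith

lemma phi1_gt_p1 : p₁ < phi1 π00 π01 π10 π11 ε t := by
  by_contra hcon
  push_neg at hcon
  have := S.f1_mono_le (S.phi1_pos ht htL).le hcon
  rw [S.f1_phi1 ht htL, S.hfix₁] at this
  have := S.p1_lt_p0
  linarith

lemma lt_phi1 : t < phi1 π00 π01 π10 π11 ε t := by
  have h := S.s1_above (S.phi1_gt_p1 ht htL)
  rwa [S.f1_phi1 ht htL] at h

end phi1

section psi0

variable {t : ℝ} (hm : f₀ π00 π01 π10 π11 ε 0 < t) (htp : t ≤ p₁)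
include hm htp

lemma psi0_denom_pos : 0 < (1 - ε) * π00 - ε * π01 * t := by
  have h : t < (1 - ε) / ε * (π00 / π01) := by
    calc t ≤ p₁ := htp
    _ < p₀ := S.p1_lt_p0
    _ < _ := S.p0_lt_L0
  rw [div_mul_div_comm, lt_div_iff₀ (mul_pos S.hε0 S.h01)] at h
  nlinarith

lemma psi0_num_pos : 0 < ε * π11 * t - (1 - ε) * π10 := by
  have h2 : f₀ π00 π01 π10 π11 ε 0 = (1 - ε) * π10 / (ε * π11) := by
    unfold f₀; rw [div_mul_div_comm]; congr 1 <;> ring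
  rw [h2, div_lt_iff₀ (mul_pos S.hε0 S.h11)] at hm
  nlinarith

lemma psi0_pos : 0 < psi0 π00 π01 π10 π11 ε t :=
  div_pos (S.psi0_num_pos hm htp) (S.psi0_denom_pos hm htp)

lemma f0_psi0 : f₀ π00 π01 π10 π11 ε (psi0 π00 π01 π10 π11 ε t) = t := by
  have hd := S.psi0_denom_pos hm htp
  have hdet := S.hdet
  have hε1 := S.hε1
  have hε0 := S.hε0
  unfold f₀ psi0
  have e1 : π00 * ((ε * π11 * t - (1 - ε) * π10) / ((1 - ε) * π00 - ε * π01 * t)) + π10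
      = (ε * t * (π00 * π11 - π01 * π10)) / ((1 - ε) * π00 - ε * π01 * t) := by
    rw [mul_div_assoc', div_add' _ _ _ hd.ne']
    congr 1
    ring
  have e2 : π01 * ((ε * π11 * t - (1 - ε) * π10) / ((1 - ε) * π00 - ε * π01 * t)) + π11
      = ((1 - ε) * (π00 * π11 - π01 * π10)) / ((1 - ε) * π00 - ε * π01 * t) := by
    rw [mul_div_assoc', div_add' _ _ _ hd.ne']
    congr 1
    ring
  rw [e1, e2, div_div_div_comm, div_self hd.ne', div_one,
    mul_div_mul_right _ _ hdet.ne']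
  field_simp

lemma f0_lt_iff {x : ℝ} (hx : 0 < x) :
    f₀ π00 π01 π10 π11 ε x < t ↔ x < psi0 π00 π01 π10 π11 ε t := by
  have hD := S.Dpos hx.le
  have hd := S.psi0_denom_pos hm htp
  unfold f₀ psi0
  rw [div_mul_div_comm, div_lt_iff₀ (mul_pos S.hε0 hD), lt_div_iff₀ hd]
  have key : (1 - ε) * (π00 * x + π10) - t * (ε * (π01 * x + π11))
      = x * ((1 - ε) * π00 - ε * π01 * t) - (ε * π11 * t - (1 - ε) * π10) := by ring
  constructor <;> intro h <;> linarith

lemma psi0_lt : psi0 π00 π01 π10 π11 ε t < t := by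
  have hlt : psi0 π00 π01 π10 π11 ε t < p₀ := by
    by_contra hcon
    push_neg at hcon
    rcases eq_or_lt_of_le hcon with h | h
    · have := S.f0_psi0 hm htp
      rw [← h, S.hfix₀] at this
      have := S.p1_lt_p0; linarith [htp, this]
    · have h3 := S.f0_mono S.hp₀.le h
      rw [S.hfix₀, S.f0_psi0 hm htp] at h3
      have := S.p1_lt_p0; linarith [htp]
  have h := S.s0_below (S.psi0_pos hm htp).le hlt
  rwa [S.f0_psi0 hm htp] at h

end psi0

end Hyp
end BWProof
namespace BWProof

open Set MeasureTheory
open scoped ENNReal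

namespace Hyp

variable {π00 π01 π10 π11 ε p₀ p₁ : ℝ}
variable (S : Hyp π00 π01 π10 π11 ε p₀ p₁)
include S

/-- if `t ≥ p₀` and `f₀ x > t` with `x > 0` then `x > t`. -/
lemma f0_push {t x : ℝ} (ht : p₀ ≤ t) (hx : 0 < x)
    (h : t < f₀ π00 π01 π10 π11 ε x) : t < x := by
  rcases le_or_gt x p₀ with h2 | h2
  · have := S.f0_mono_le hx.le h2
    rw [S.hfix₀] at this
    linarith
  · have := S.s0_above h2
    linarith

/-- if `t ≤ p₁` and `f₁ x < t` with `x > 0` then `x < t`. -/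
lemma f1_push {t x : ℝ} (ht : t ≤ p₁) (hx : 0 < x)
    (h : f₁ π00 π01 π10 π11 ε x < t) : x < t := by
  rcases le_or_gt p₁ x with h2 | h2
  · exfalso
    have h3 := S.f1_mono_le S.hp₁.le h2
    rw [S.hfix₁] at h3
    linarith
  · have := S.s1_below hx.le h2
    linarith

end Hyp

section Support

variable {π00 π01 π10 π11 ε p₀ p₁ : ℝ}
variable (S : Hyp π00 π01 π10 π11 ε p₀ p₁)
variable (Q : Measure ℝ) [IsProbabilityMeasure Q]
variable (hQpos : Q (Set.Ioi 0) = 1)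
variable (hQinv : BlackwellInvariant π00 π01 π10 π11 ε Q)

local notation "F0" => f₀ π00 π01 π10 π11 ε
local notation "F1" => f₁ π00 π01 π10 π11 ε
local notation "R0" => fun x => ENNReal.ofReal (r₀ π00 π01 π10 π11 ε x)
local notation "R1" => fun x => ENNReal.ofReal (r₁ π00 π01 π10 π11 ε x)

include hQpos in
lemma Q_Iic_zero : Q (Set.Iic 0) = 0 := by
  have h := measure_compl (measurableSet_Ioi (a := (0:ℝ))) (measure_ne_top Q _)
  rw [hQpos, measure_univ, Set.compl_Ioi] at h
  simpa using h

include hQpos in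
lemma setLIntegral_inter_pos (A : Set ℝ) (R : ℝ → ℝ≥0∞) :
    ∫⁻ x in A, R x ∂Q = ∫⁻ x in A ∩ Set.Ioi 0, R x ∂Q := by
  apply setLIntegral_congr
  rw [MeasureTheory.ae_eq_set]
  constructor
  · apply measure_mono_null _ (Q_Iic_zero Q hQpos)
    intro x hx
    rcases hx with ⟨hxA, hx2⟩
    by_contra hcon
    simp only [Set.mem_Iic, not_le] at hcon
    exact hx2 ⟨hxA, hcon⟩
  · simp [Set.diff_eq_empty.mpr Set.inter_subset_left]

include S in
lemma sum_one (s : Set ℝ) (hs : MeasurableSet s) (hsub : s ⊆ Set.Ioi 0) :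
    (∫⁻ x in s, R0 x ∂Q) + ∫⁻ x in s, R1 x ∂Q = Q s := by
  rw [← lintegral_add_left er0_measurable]
  have h : ∀ x ∈ s, ENNReal.ofReal (r₀ π00 π01 π10 π11 ε x)
      + ENNReal.ofReal (r₁ π00 π01 π10 π11 ε x) = 1 := fun x hx => S.er_sum (hsub hx)
  rw [setLIntegral_congr_fun hs h, setLIntegral_one]

include S in
lemma int_r0_le (s : Set ℝ) (hs : MeasurableSet s) (hsub : s ⊆ Set.Ioi 0) :
    ∫⁻ x in s, R0 x ∂Q ≤ Q s :=
  le_trans le_self_add (sum_one S Q s hs hsub).le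

include S in
lemma int_r1_le (s : Set ℝ) (hs : MeasurableSet s) (hsub : s ⊆ Set.Ioi 0) :
    ∫⁻ x in s, R1 x ∂Q ≤ Q s :=
  le_trans le_add_self (sum_one S Q s hs hsub).le

include S in
lemma int_r0_ne_top (s : Set ℝ) (hs : MeasurableSet s) (hsub : s ⊆ Set.Ioi 0) :
    ∫⁻ x in s, R0 x ∂Q ≠ ⊤ :=
  (lt_of_le_of_lt (int_r0_le S Q s hs hsub) (measure_lt_top Q s)).ne

include S in
lemma int_r1_ne_top (s : Set ℝ) (hs : MeasurableSet s) (hsub : s ⊆ Set.Ioi 0) :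
    ∫⁻ x in s, R1 x ∂Q ≠ ⊤ :=
  (lt_of_le_of_lt (int_r1_le S Q s hs hsub) (measure_lt_top Q s)).ne

include S in
lemma null_of_r1 (s : Set ℝ) (hs : MeasurableSet s) (hsub : s ⊆ Set.Ioi 0)
    (h : ∫⁻ x in s, R1 x ∂Q = 0) : Q s = 0 := by
  have h2 := (lintegral_eq_zero_iff er1_measurable).mp h
  have h4 : ∀ᵐ x ∂(Q.restrict s), x ∉ s := by
    filter_upwards [h2] with x hx hxs
    simp only [Pi.zero_apply, ENNReal.ofReal_eq_zero] at hx
    exact absurd hx (not_le.mpr (S.r1_pos (le_of_lt (hsub hxs))))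
  have h5 := MeasureTheory.ae_iff.mp h4
  refine le_antisymm ?_ zero_le
  calc Q s = Q.restrict s s := (Measure.restrict_apply_self Q s).symm
  _ ≤ Q.restrict s {x : ℝ | ¬ x ∉ s} := measure_mono (fun x hx => not_not.mpr hx)
  _ = 0 := h5

include S in
lemma null_of_r0 (s : Set ℝ) (hs : MeasurableSet s) (hsub : s ⊆ Set.Ioi 0)
    (h : ∫⁻ x in s, R0 x ∂Q = 0) : Q s = 0 := by
  have h2 := (lintegral_eq_zero_iff er0_measurable).mp h
  have h4 : ∀ᵐ x ∂(Q.restrict s), x ∉ s := by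
    filter_upwards [h2] with x hx hxs
    simp only [Pi.zero_apply, ENNReal.ofReal_eq_zero] at hx
    exact absurd hx (not_le.mpr (S.r0_pos (le_of_lt (hsub hxs))))
  have h5 := MeasureTheory.ae_iff.mp h4
  refine le_antisymm ?_ zero_le
  calc Q s = Q.restrict s s := (Measure.restrict_apply_self Q s).symm
  _ ≤ Q.restrict s {x : ℝ | ¬ x ∉ s} := measure_mono (fun x hx => not_not.mpr hx)
  _ = 0 := h5

include S hQpos hQinv in
lemma upper_base {t : ℝ} (ht : p₀ ≤ t) (htL : ε / (1 - ε) * (π00 / π01) ≤ t) :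
    Q (Set.Ioi t) = 0 := by
  have ht0 : 0 < t := lt_of_lt_of_le S.hp₀ ht
  have hsub : Set.Ioi t ⊆ Set.Ioi (0:ℝ) := fun x hx => lt_trans ht0 hx
  have hinv := hQinv (Set.Ioi t) measurableSet_Ioi hsub
  have hT1 : ∫⁻ x in F1 ⁻¹' Set.Ioi t, R1 x ∂Q = 0 := by
    rw [setLIntegral_inter_pos Q hQpos]
    have hempty : (F1 ⁻¹' Set.Ioi t) ∩ Set.Ioi 0 = (∅ : Set ℝ) := by
      rw [Set.eq_empty_iff_forall_notMem]
      rintro x ⟨hx1, hx2⟩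
      have := S.f1_lt_L1 (le_of_lt hx2)
      simp only [Set.mem_preimage, Set.mem_Ioi] at hx1
      linarith
    rw [hempty]
    simp
  have hT0 : ∫⁻ x in F0 ⁻¹' Set.Ioi t, R0 x ∂Q ≤ ∫⁻ x in Set.Ioi t, R0 x ∂Q := by
    rw [setLIntegral_inter_pos Q hQpos]
    apply lintegral_mono_set
    rintro x ⟨hx1, hx2⟩
    simp only [Set.mem_preimage, Set.mem_Ioi] at hx1 ⊢
    exact S.f0_push ht hx2 hx1
  have hle : Q (Set.Ioi t) ≤ ∫⁻ x in Set.Ioi t, R0 x ∂Q + 0 := by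
    rw [hinv, hT1]
    exact add_le_add_left hT0 0
  rw [← sum_one S Q (Set.Ioi t) measurableSet_Ioi hsub] at hle
  rw [ENNReal.add_le_add_iff_left (int_r0_ne_top S Q _ measurableSet_Ioi hsub)] at hle
  exact null_of_r1 S Q _ measurableSet_Ioi hsub (le_antisymm (by simpa using hle) zero_le)

include S hQpos hQinv in
lemma upper_step {t : ℝ} (ht : p₀ ≤ t) (htL : t < ε / (1 - ε) * (π00 / π01)) :
    Q (Set.Ioi t) = Q (Set.Ioi (phi1 π00 π01 π10 π11 ε t)) := by
  set φ := phi1 π00 π01 π10 π11 ε t with hφ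
  have hφt : t < φ := S.lt_phi1 ht htL
  have ht0 : 0 < t := lt_of_lt_of_le S.hp₀ ht
  have hsub : Set.Ioi t ⊆ Set.Ioi (0:ℝ) := fun x hx => lt_trans ht0 hx
  have hsubφ : Set.Ioi φ ⊆ Set.Ioi (0:ℝ) := fun x hx => lt_trans (ht0.trans hφt) hx
  have hinv := hQinv (Set.Ioi t) measurableSet_Ioi hsub
  have hset : F1 ⁻¹' Set.Ioi t ∩ Set.Ioi 0 = Set.Ioi φ := by
    ext x
    simp only [Set.mem_inter_iff, Set.mem_preimage, Set.mem_Ioi]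
    constructor
    · rintro ⟨hx1, hx2⟩
      exact (S.f1_gt_iff ht htL hx2).mp hx1
    · intro hx
      have hx0 : (0:ℝ) < x := lt_trans (ht0.trans hφt) hx
      exact ⟨(S.f1_gt_iff ht htL hx0).mpr hx, hx0⟩
  have hT1 : ∫⁻ x in F1 ⁻¹' Set.Ioi t, R1 x ∂Q = ∫⁻ x in Set.Ioi φ, R1 x ∂Q := by
    rw [setLIntegral_inter_pos Q hQpos, hset]
  have hT0 : ∫⁻ x in F0 ⁻¹' Set.Ioi t, R0 x ∂Q ≤ ∫⁻ x in Set.Ioi t, R0 x ∂Q := by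
    rw [setLIntegral_inter_pos Q hQpos]
    apply lintegral_mono_set
    rintro x ⟨hx1, hx2⟩
    simp only [Set.mem_preimage, Set.mem_Ioi] at hx1 ⊢
    exact S.f0_push ht hx2 hx1
  have hle : Q (Set.Ioi t) ≤ ∫⁻ x in Set.Ioi t, R0 x ∂Q + ∫⁻ x in Set.Ioi φ, R1 x ∂Q := by
    rw [hinv, hT1]
    exact add_le_add_left hT0 _
  rw [← sum_one S Q (Set.Ioi t) measurableSet_Ioi hsub,
    ENNReal.add_le_add_iff_left (int_r0_ne_top S Q _ measurableSet_Ioi hsub)] at hle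
  have hge : ∫⁻ x in Set.Ioi φ, R1 x ∂Q ≤ ∫⁻ x in Set.Ioi t, R1 x ∂Q :=
    lintegral_mono_set (fun x hx => lt_trans hφt hx)
  have heq : ∫⁻ x in Set.Ioi t, R1 x ∂Q = ∫⁻ x in Set.Ioi φ, R1 x ∂Q :=
    le_antisymm hle hge
  have hsplit : ∫⁻ x in Set.Ioi t, R1 x ∂Q
      = (∫⁻ x in Set.Ioc t φ, R1 x ∂Q) + ∫⁻ x in Set.Ioi φ, R1 x ∂Q := by
    rw [← lintegral_union measurableSet_Ioi (Set.Ioc_disjoint_Ioi le_rfl),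
      Set.Ioc_union_Ioi_eq_Ioi hφt.le]
  have hIoc : ∫⁻ x in Set.Ioc t φ, R1 x ∂Q = 0 := by
    have := heq.symm.trans hsplit
    -- ∫ Ioi φ = ∫ Ioc + ∫ Ioi φ
    nth_rewrite 1 [← zero_add (∫⁻ x in Set.Ioi φ, R1 x ∂Q)] at this
    exact ((ENNReal.add_left_inj (int_r1_ne_top S Q _ measurableSet_Ioi hsubφ)).mp this.symm)
  have hsubIoc : Set.Ioc t φ ⊆ Set.Ioi (0:ℝ) := fun x hx => lt_trans ht0 hx.1
  have hQIoc : Q (Set.Ioc t φ) = 0 := null_of_r1 S Q _ measurableSet_Ioc hsubIoc hIoc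
  apply le_antisymm
  · calc Q (Set.Ioi t) = Q (Set.Ioc t φ ∪ Set.Ioi φ) := by rw [Set.Ioc_union_Ioi_eq_Ioi hφt.le]
    _ ≤ Q (Set.Ioc t φ) + Q (Set.Ioi φ) := measure_union_le _ _
    _ = Q (Set.Ioi φ) := by rw [hQIoc, zero_add]
  · exact measure_mono (fun x hx => lt_trans hφt hx)

include S hQpos hQinv in
lemma Q_Ioi_p0_zero : Q (Set.Ioi p₀) = 0 := by
  set L := ε / (1 - ε) * (π00 / π01) with hL
  rcases le_or_gt L p₀ with hLp | hLp
  · exact upper_base S Q hQpos hQinv le_rfl hLp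
  · have hcont : ContinuousOn (fun s => s - f₁ π00 π01 π10 π11 ε s) (Set.Icc p₀ L) :=
      continuousOn_id.sub (S.f1_continuousOn.mono (fun x hx => le_trans S.hp₀.le hx.1))
    obtain ⟨z, hz, hzmin⟩ := isCompact_Icc.exists_isMinOn ⟨p₀, le_refl p₀, hLp.le⟩ hcont
    set c := z - f₁ π00 π01 π10 π11 ε z with hc
    have hcpos : 0 < c := sub_pos.mpr (S.s1_above (lt_of_lt_of_le S.p1_lt_p0 hz.1))
    have hgap : ∀ u, p₀ ≤ u → u < L → phi1 π00 π01 π10 π11 ε u < L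
        → u + c ≤ phi1 π00 π01 π10 π11 ε u := by
      intro u hu huL hφL
      have hmem : phi1 π00 π01 π10 π11 ε u ∈ Set.Icc p₀ L :=
        ⟨le_trans hu (S.lt_phi1 hu huL).le, hφL.le⟩
      have h2 := isMinOn_iff.mp hzmin _ hmem
      have h3 := S.f1_phi1 hu huL
      rw [h3] at h2
      linarith
    have hind : ∀ n : ℕ, ∀ u, p₀ ≤ u → L ≤ u + n * c → Q (Set.Ioi u) = 0 := by
      intro n
      induction n with
      | zero =>
        intro u hu hL2
        exact upper_base S Q hQpos hQinv hu (by simpa using hL2)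
      | succ n ih =>
        intro u hu hL2
        rcases le_or_gt L u with h | h
        · exact upper_base S Q hQpos hQinv hu h
        · rw [upper_step S Q hQpos hQinv hu h]
          have hφu : u < phi1 π00 π01 π10 π11 ε u := S.lt_phi1 hu h
          rcases le_or_gt L (phi1 π00 π01 π10 π11 ε u) with h2 | h2
          · exact upper_base S Q hQpos hQinv (hu.trans hφu.le) h2
          · apply ih _ (hu.trans hφu.le)
            have := hgap u hu h h2
            push_cast at hL2 ⊢
            linarith
    obtain ⟨n, hn⟩ := exists_nat_ge ((L - p₀) / c)
    apply hind n p₀ le_rfl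
    rw [div_le_iff₀ hcpos] at hn
    linarith

include S hQpos hQinv in
lemma lower_base {t : ℝ} (h0 : 0 < t) (htp : t ≤ p₁) (hm : t ≤ f₀ π00 π01 π10 π11 ε 0) :
    Q (Set.Ioo 0 t) = 0 := by
  have hsub : Set.Ioo (0:ℝ) t ⊆ Set.Ioi (0:ℝ) := fun x hx => hx.1
  have hinv := hQinv (Set.Ioo 0 t) measurableSet_Ioo hsub
  have hT0 : ∫⁻ x in F0 ⁻¹' Set.Ioo 0 t, R0 x ∂Q = 0 := by
    rw [setLIntegral_inter_pos Q hQpos]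
    have hempty : (F0 ⁻¹' Set.Ioo 0 t) ∩ Set.Ioi 0 = (∅ : Set ℝ) := by
      rw [Set.eq_empty_iff_forall_notMem]
      rintro x ⟨hx1, hx2⟩
      simp only [Set.mem_preimage, Set.mem_Ioo] at hx1
      have := S.f0_mono (le_refl (0:ℝ)) hx2
      linarith [hx1.2]
    rw [hempty]
    simp
  have hT1 : ∫⁻ x in F1 ⁻¹' Set.Ioo 0 t, R1 x ∂Q ≤ ∫⁻ x in Set.Ioo 0 t, R1 x ∂Q := by
    rw [setLIntegral_inter_pos Q hQpos]
    apply lintegral_mono_set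
    rintro x ⟨hx1, hx2⟩
    simp only [Set.mem_preimage, Set.mem_Ioo] at hx1
    exact ⟨hx2, S.f1_push htp hx2 hx1.2⟩
  have hle : Q (Set.Ioo 0 t) ≤ 0 + ∫⁻ x in Set.Ioo 0 t, R1 x ∂Q := by
    rw [hinv, hT0]
    exact add_le_add_right hT1 _
  rw [← sum_one S Q (Set.Ioo 0 t) measurableSet_Ioo hsub,
    ENNReal.add_le_add_iff_right (int_r1_ne_top S Q _ measurableSet_Ioo hsub)] at hle
  exact null_of_r0 S Q _ measurableSet_Ioo hsub (le_antisymm (by simpa using hle) zero_le)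

include S hQpos hQinv in
lemma lower_step {t : ℝ} (hm : f₀ π00 π01 π10 π11 ε 0 < t) (htp : t ≤ p₁) :
    Q (Set.Ioo 0 t) = Q (Set.Ioo 0 (psi0 π00 π01 π10 π11 ε t)) := by
  set ψ := psi0 π00 π01 π10 π11 ε t with hψ
  have hψ0 : 0 < ψ := S.psi0_pos hm htp
  have hψt : ψ < t := S.psi0_lt hm htp
  have hsub : Set.Ioo (0:ℝ) t ⊆ Set.Ioi (0:ℝ) := fun x hx => hx.1
  have hsubψ : Set.Ioo (0:ℝ) ψ ⊆ Set.Ioi (0:ℝ) := fun x hx => hx.1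
  have hinv := hQinv (Set.Ioo 0 t) measurableSet_Ioo hsub
  have hset : F0 ⁻¹' Set.Ioo 0 t ∩ Set.Ioi 0 = Set.Ioo 0 ψ := by
    ext x
    simp only [Set.mem_inter_iff, Set.mem_preimage, Set.mem_Ioo, Set.mem_Ioi]
    constructor
    · rintro ⟨hx1, hx2⟩
      exact ⟨hx2, (S.f0_lt_iff hm htp hx2).mp hx1.2⟩
    · rintro ⟨hx1, hx2⟩
      exact ⟨⟨S.f0_pos hx1.le, (S.f0_lt_iff hm htp hx1).mpr hx2⟩, hx1⟩
  have hT0 : ∫⁻ x in F0 ⁻¹' Set.Ioo 0 t, R0 x ∂Q = ∫⁻ x in Set.Ioo 0 ψ, R0 x ∂Q := by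
    rw [setLIntegral_inter_pos Q hQpos, hset]
  have hT1 : ∫⁻ x in F1 ⁻¹' Set.Ioo 0 t, R1 x ∂Q ≤ ∫⁻ x in Set.Ioo 0 t, R1 x ∂Q := by
    rw [setLIntegral_inter_pos Q hQpos]
    apply lintegral_mono_set
    rintro x ⟨hx1, hx2⟩
    simp only [Set.mem_preimage, Set.mem_Ioo] at hx1
    exact ⟨hx2, S.f1_push htp hx2 hx1.2⟩
  have hle : Q (Set.Ioo 0 t) ≤ (∫⁻ x in Set.Ioo 0 ψ, R0 x ∂Q) + ∫⁻ x in Set.Ioo 0 t, R1 x ∂Q := by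
    rw [hinv, hT0]
    exact add_le_add_right hT1 _
  rw [← sum_one S Q (Set.Ioo 0 t) measurableSet_Ioo hsub,
    ENNReal.add_le_add_iff_right (int_r1_ne_top S Q _ measurableSet_Ioo hsub)] at hle
  have hge : ∫⁻ x in Set.Ioo 0 ψ, R0 x ∂Q ≤ ∫⁻ x in Set.Ioo 0 t, R0 x ∂Q :=
    lintegral_mono_set (fun x hx => ⟨hx.1, lt_trans hx.2 hψt⟩)
  have heq : ∫⁻ x in Set.Ioo 0 t, R0 x ∂Q = ∫⁻ x in Set.Ioo 0 ψ, R0 x ∂Q :=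
    le_antisymm hle hge
  have hdisj : Disjoint (Set.Ioo (0:ℝ) ψ) (Set.Ico ψ t) :=
    Set.disjoint_left.mpr (fun x hx1 hx2 => absurd hx2.1 (not_le.mpr hx1.2))
  have hsplit : ∫⁻ x in Set.Ioo 0 t, R0 x ∂Q
      = (∫⁻ x in Set.Ioo 0 ψ, R0 x ∂Q) + ∫⁻ x in Set.Ico ψ t, R0 x ∂Q := by
    rw [← lintegral_union measurableSet_Ico hdisj, Set.Ioo_union_Ico_eq_Ioo hψ0 hψt.le]
  have hIco : ∫⁻ x in Set.Ico ψ t, R0 x ∂Q = 0 := by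
    have h5 := heq.symm.trans hsplit
    nth_rewrite 1 [← add_zero (∫⁻ x in Set.Ioo 0 ψ, R0 x ∂Q)] at h5
    exact ((ENNReal.add_right_inj (int_r0_ne_top S Q _ measurableSet_Ioo hsubψ)).mp h5).symm
  have hsubIco : Set.Ico ψ t ⊆ Set.Ioi (0:ℝ) := fun x hx => lt_of_lt_of_le hψ0 hx.1
  have hQIco : Q (Set.Ico ψ t) = 0 := null_of_r0 S Q _ measurableSet_Ico hsubIco hIco
  apply le_antisymm
  · calc Q (Set.Ioo 0 t) = Q (Set.Ioo 0 ψ ∪ Set.Ico ψ t) := by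
          rw [Set.Ioo_union_Ico_eq_Ioo hψ0 hψt.le]
    _ ≤ Q (Set.Ioo 0 ψ) + Q (Set.Ico ψ t) := measure_union_le _ _
    _ = Q (Set.Ioo 0 ψ) := by rw [hQIco, add_zero]
  · exact measure_mono (fun x hx => ⟨hx.1, lt_trans hx.2 hψt⟩)

include S hQpos hQinv in
lemma Q_Iio_p1_zero : Q (Set.Iio p₁) = 0 := by
  set m := f₀ π00 π01 π10 π11 ε 0 with hm
  have hm0 : 0 < m := S.f0_pos le_rfl
  have hmain : Q (Set.Ioo 0 p₁) = 0 := by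
    rcases le_or_gt p₁ m with hpm | hpm
    · exact lower_base S Q hQpos hQinv S.hp₁ le_rfl hpm
    · have hcont : ContinuousOn (fun s => f₀ π00 π01 π10 π11 ε s - s) (Set.Icc 0 p₁) :=
        (S.f0_continuousOn.mono (fun x hx => hx.1)).sub continuousOn_id
      obtain ⟨z, hz, hzmin⟩ := isCompact_Icc.exists_isMinOn
        (Set.nonempty_Icc.mpr S.hp₁.le) hcont
      set c := f₀ π00 π01 π10 π11 ε z - z with hc
      have hcpos : 0 < c :=
        sub_pos.mpr (S.s0_below hz.1 (lt_of_le_of_lt hz.2 S.p1_lt_p0))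
      have hgap : ∀ u, m < u → u ≤ p₁ → psi0 π00 π01 π10 π11 ε u ≤ u - c := by
        intro u hu hup
        have hψ0 : 0 < psi0 π00 π01 π10 π11 ε u := S.psi0_pos hu hup
        have hψu : psi0 π00 π01 π10 π11 ε u < u := S.psi0_lt hu hup
        have hmem : psi0 π00 π01 π10 π11 ε u ∈ Set.Icc 0 p₁ :=
          ⟨hψ0.le, le_trans hψu.le hup⟩
        have h2 := isMinOn_iff.mp hzmin _ hmem
        have h3 := S.f0_psi0 hu hup
        rw [h3] at h2
        linarith
      have hind : ∀ n : ℕ, ∀ u, 0 < u → u ≤ p₁ → u ≤ m + n * c → Q (Set.Ioo 0 u) = 0 := by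
        intro n
        induction n with
        | zero =>
          intro u hu hup hum
          exact lower_base S Q hQpos hQinv hu hup (by simpa using hum)
        | succ n ih =>
          intro u hu hup hum
          rcases le_or_gt u m with h | h
          · exact lower_base S Q hQpos hQinv hu hup h
          · rw [lower_step S Q hQpos hQinv h hup]
            have hψ0 : 0 < psi0 π00 π01 π10 π11 ε u := S.psi0_pos h hup
            have hψu : psi0 π00 π01 π10 π11 ε u < u := S.psi0_lt h hup
            apply ih _ hψ0 (le_trans hψu.le hup)
            have := hgap u h hup
            push_cast at hum ⊢
            linarith
      obtain ⟨n, hn⟩ := exists_nat_ge ((p₁ - m) / c)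
      apply hind n p₁ S.hp₁ le_rfl
      rw [div_le_iff₀ hcpos] at hn
      linarith
  have hsplit : Set.Iio p₁ ⊆ Set.Iic 0 ∪ Set.Ioo 0 p₁ := by
    intro x hx
    rcases le_or_gt x 0 with h | h
    · exact Or.inl h
    · exact Or.inr ⟨h, hx⟩
  refine le_antisymm ?_ zero_le
  calc Q (Set.Iio p₁) ≤ Q (Set.Iic 0 ∪ Set.Ioo 0 p₁) := measure_mono hsplit
  _ ≤ Q (Set.Iic 0) + Q (Set.Ioo 0 p₁) := measure_union_le _ _
  _ = 0 := by rw [Q_Iic_zero Q hQpos, hmain, add_zero]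

include S hQpos hQinv in
lemma Q_compl_Icc_zero : Q ((Set.Icc p₁ p₀)ᶜ) = 0 := by
  have hsub : (Set.Icc p₁ p₀)ᶜ ⊆ Set.Iio p₁ ∪ Set.Ioi p₀ := by
    intro x hx
    simp only [Set.mem_compl_iff, Set.mem_Icc, not_and_or, not_le] at hx
    rcases hx with h | h
    · exact Or.inl h
    · exact Or.inr h
  refine le_antisymm ?_ zero_le
  calc Q ((Set.Icc p₁ p₀)ᶜ) ≤ Q (Set.Iio p₁ ∪ Set.Ioi p₀) := measure_mono hsub
  _ ≤ Q (Set.Iio p₁) + Q (Set.Ioi p₀) := measure_union_le _ _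
  _ = 0 := by
      rw [Q_Iio_p1_zero S Q hQpos hQinv, Q_Ioi_p0_zero S Q hQpos hQinv, add_zero]

include S hQpos hQinv in
lemma ae_mem_Icc : ∀ᵐ x ∂Q, x ∈ Set.Icc p₁ p₀ :=
  MeasureTheory.mem_ae_iff.mpr (Q_compl_Icc_zero S Q hQpos hQinv)

include S hQpos hQinv in
lemma Q_Icc_one : Q (Set.Icc p₁ p₀) = 1 := by
  have h := measure_compl (measurableSet_Icc (a := p₁) (b := p₀)) (measure_ne_top Q _)
  rw [Q_compl_Icc_zero S Q hQpos hQinv, measure_univ] at h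
  have h4 : (1:ℝ≥0∞) ≤ Q (Set.Icc p₁ p₀) := tsub_eq_zero_iff_le.mp h.symm
  exact le_antisymm prob_le_one h4

end Support

end BWProof
namespace BWProof

open Set MeasureTheory
open scoped ENNReal

/-- helper: `(a/b)/(a/b+1) = a/(a+b)` -/
lemma frac_u1 (a b : ℝ) (hb : 0 < b) (hab : 0 < a + b) :
    (a / b) / (a / b + 1) = a / (a + b) := by
  rw [div_add_one hb.ne', div_div_div_comm, div_self hb.ne', div_one]

/-- helper: `1/(a/b+1) = b/(a+b)` -/
lemma frac_u2 (a b : ℝ) (hb : 0 < b) (hab : 0 < a + b) :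
    1 / (a / b + 1) = b / (a + b) := by
  rw [div_add_one hb.ne', one_div_div]

namespace Hyp

variable {π00 π01 π10 π11 ε p₀ p₁ : ℝ}
variable (S : Hyp π00 π01 π10 π11 ε p₀ p₁)
include S

lemma f0_ratio {x : ℝ} (hx : 0 ≤ x) :
    f₀ π00 π01 π10 π11 ε x
      = ((1 - ε) * (π00 * x + π10)) / (ε * (π01 * x + π11)) := by
  unfold f₀; rw [div_mul_div_comm]

lemma f1_ratio {x : ℝ} (hx : 0 ≤ x) :
    f₁ π00 π01 π10 π11 ε x
      = (ε * (π00 * x + π10)) / ((1 - ε) * (π01 * x + π11)) := by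
  unfold f₁; rw [div_mul_div_comm]

lemma P0_pos {x : ℝ} (hx : 0 ≤ x) :
    0 < (1 - ε) * (π00 * x + π10) + ε * (π01 * x + π11) :=
  add_pos (mul_pos S.hε1 (S.Npos hx)) (mul_pos S.hε0 (S.Dpos hx))

lemma P1_pos {x : ℝ} (hx : 0 ≤ x) :
    0 < ε * (π00 * x + π10) + (1 - ε) * (π01 * x + π11) :=
  add_pos (mul_pos S.hε0 (S.Npos hx)) (mul_pos S.hε1 (S.Dpos hx))

lemma r0_formula {x : ℝ} (hx : 0 < x) :
    r₀ π00 π01 π10 π11 ε x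
      = ((1 - ε) * (π00 * x + π10) + ε * (π01 * x + π11)) / (x + 1) := by
  unfold r₀; congr 1; ring

lemma r1_formula {x : ℝ} (hx : 0 < x) :
    r₁ π00 π01 π10 π11 ε x
      = (ε * (π00 * x + π10) + (1 - ε) * (π01 * x + π11)) / (x + 1) := by
  unfold r₁; congr 1; ring

lemma id_f0_u1 {x : ℝ} (hx : 0 < x) :
    (f₀ π00 π01 π10 π11 ε x / (f₀ π00 π01 π10 π11 ε x + 1)) * r₀ π00 π01 π10 π11 ε x
      = (1 - ε) * (π00 * (x / (x + 1)) + π10 * (1 / (x + 1))) := by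
  rw [S.f0_ratio hx.le, frac_u1 _ _ (mul_pos S.hε0 (S.Dpos hx.le)) (S.P0_pos hx.le),
    S.r0_formula hx]
  have hP := S.P0_pos hx.le
  have hx1 : (0:ℝ) < x + 1 := by linarith
  field_simp
  rw [mul_div_assoc, div_self (ne_of_gt (by linarith [hP])), mul_one]

lemma id_f0_u2 {x : ℝ} (hx : 0 < x) :
    (1 / (f₀ π00 π01 π10 π11 ε x + 1)) * r₀ π00 π01 π10 π11 ε x
      = ε * (π01 * (x / (x + 1)) + π11 * (1 / (x + 1))) := by
  rw [S.f0_ratio hx.le, frac_u2 _ _ (mul_pos S.hε0 (S.Dpos hx.le)) (S.P0_pos hx.le),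
    S.r0_formula hx]
  have hP := S.P0_pos hx.le
  have hx1 : (0:ℝ) < x + 1 := by linarith
  field_simp
  rw [mul_div_assoc, div_self (ne_of_gt (by linarith [hP])), mul_one]

lemma id_f1_u1 {x : ℝ} (hx : 0 < x) :
    (f₁ π00 π01 π10 π11 ε x / (f₁ π00 π01 π10 π11 ε x + 1)) * r₁ π00 π01 π10 π11 ε x
      = ε * (π00 * (x / (x + 1)) + π10 * (1 / (x + 1))) := by
  rw [S.f1_ratio hx.le, frac_u1 _ _ (mul_pos S.hε1 (S.Dpos hx.le)) (S.P1_pos hx.le),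
    S.r1_formula hx]
  have hP := S.P1_pos hx.le
  have hx1 : (0:ℝ) < x + 1 := by linarith
  field_simp
  rw [mul_div_assoc, div_self (ne_of_gt (by linarith [hP])), mul_one]

lemma id_f1_u2 {x : ℝ} (hx : 0 < x) :
    (1 / (f₁ π00 π01 π10 π11 ε x + 1)) * r₁ π00 π01 π10 π11 ε x
      = (1 - ε) * (π01 * (x / (x + 1)) + π11 * (1 / (x + 1))) := by
  rw [S.f1_ratio hx.le, frac_u2 _ _ (mul_pos S.hε1 (S.Dpos hx.le)) (S.P1_pos hx.le),
    S.r1_formula hx]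
  have hP := S.P1_pos hx.le
  have hx1 : (0:ℝ) < x + 1 := by linarith
  field_simp
  rw [mul_div_assoc, div_self (ne_of_gt (by linarith [hP])), mul_one]

-- ENNReal versions
lemma eid_f0_u1 {x : ℝ} (hx : 0 < x) :
    ENNReal.ofReal (f₀ π00 π01 π10 π11 ε x / (f₀ π00 π01 π10 π11 ε x + 1))
        * ENNReal.ofReal (r₀ π00 π01 π10 π11 ε x)
      = ENNReal.ofReal (1 - ε) * (ENNReal.ofReal π00 * ENNReal.ofReal (x / (x + 1))
          + ENNReal.ofReal π10 * ENNReal.ofReal (1 / (x + 1))) := by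
  have hf := S.f0_pos hx.le
  have hu : 0 ≤ f₀ π00 π01 π10 π11 ε x / (f₀ π00 π01 π10 π11 ε x + 1) :=
    div_nonneg hf.le (by linarith)
  have hx1 : (0:ℝ) < x + 1 := by linarith
  rw [← ENNReal.ofReal_mul hu, S.id_f0_u1 hx,
    ← ENNReal.ofReal_mul S.h00.le, ← ENNReal.ofReal_mul S.h10.le,
    ← ENNReal.ofReal_add (mul_nonneg S.h00.le (div_nonneg hx.le hx1.le))
      (mul_nonneg S.h10.le (div_nonneg zero_le_one hx1.le)),
    ← ENNReal.ofReal_mul S.hε1.le]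

lemma eid_f0_u2 {x : ℝ} (hx : 0 < x) :
    ENNReal.ofReal (1 / (f₀ π00 π01 π10 π11 ε x + 1))
        * ENNReal.ofReal (r₀ π00 π01 π10 π11 ε x)
      = ENNReal.ofReal ε * (ENNReal.ofReal π01 * ENNReal.ofReal (x / (x + 1))
          + ENNReal.ofReal π11 * ENNReal.ofReal (1 / (x + 1))) := by
  have hf := S.f0_pos hx.le
  have hu : 0 ≤ 1 / (f₀ π00 π01 π10 π11 ε x + 1) :=
    div_nonneg zero_le_one (by linarith)
  have hx1 : (0:ℝ) < x + 1 := by linarith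
  rw [← ENNReal.ofReal_mul hu, S.id_f0_u2 hx,
    ← ENNReal.ofReal_mul S.h01.le, ← ENNReal.ofReal_mul S.h11.le,
    ← ENNReal.ofReal_add (mul_nonneg S.h01.le (div_nonneg hx.le hx1.le))
      (mul_nonneg S.h11.le (div_nonneg zero_le_one hx1.le)),
    ← ENNReal.ofReal_mul S.hε0.le]

lemma eid_f1_u1 {x : ℝ} (hx : 0 < x) :
    ENNReal.ofReal (f₁ π00 π01 π10 π11 ε x / (f₁ π00 π01 π10 π11 ε x + 1))
        * ENNReal.ofReal (r₁ π00 π01 π10 π11 ε x)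
      = ENNReal.ofReal ε * (ENNReal.ofReal π00 * ENNReal.ofReal (x / (x + 1))
          + ENNReal.ofReal π10 * ENNReal.ofReal (1 / (x + 1))) := by
  have hf := S.f1_pos hx.le
  have hu : 0 ≤ f₁ π00 π01 π10 π11 ε x / (f₁ π00 π01 π10 π11 ε x + 1) :=
    div_nonneg hf.le (by linarith)
  have hx1 : (0:ℝ) < x + 1 := by linarith
  rw [← ENNReal.ofReal_mul hu, S.id_f1_u1 hx,
    ← ENNReal.ofReal_mul S.h00.le, ← ENNReal.ofReal_mul S.h10.le,
    ← ENNReal.ofReal_add (mul_nonneg S.h00.le (div_nonneg hx.le hx1.le))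
      (mul_nonneg S.h10.le (div_nonneg zero_le_one hx1.le)),
    ← ENNReal.ofReal_mul S.hε0.le]

lemma eid_f1_u2 {x : ℝ} (hx : 0 < x) :
    ENNReal.ofReal (1 / (f₁ π00 π01 π10 π11 ε x + 1))
        * ENNReal.ofReal (r₁ π00 π01 π10 π11 ε x)
      = ENNReal.ofReal (1 - ε) * (ENNReal.ofReal π01 * ENNReal.ofReal (x / (x + 1))
          + ENNReal.ofReal π11 * ENNReal.ofReal (1 / (x + 1))) := by
  have hf := S.f1_pos hx.le
  have hu : 0 ≤ 1 / (f₁ π00 π01 π10 π11 ε x + 1) :=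
    div_nonneg zero_le_one (by linarith)
  have hx1 : (0:ℝ) < x + 1 := by linarith
  rw [← ENNReal.ofReal_mul hu, S.id_f1_u2 hx,
    ← ENNReal.ofReal_mul S.h01.le, ← ENNReal.ofReal_mul S.h11.le,
    ← ENNReal.ofReal_add (mul_nonneg S.h01.le (div_nonneg hx.le hx1.le))
      (mul_nonneg S.h11.le (div_nonneg zero_le_one hx1.le)),
    ← ENNReal.ofReal_mul S.hε1.le]

/-- image of a subinterval under f₀ -/
lemma f0_image {a b : ℝ} (ha : 0 < a) (hab : a ≤ b) :
    f₀ π00 π01 π10 π11 ε '' Set.Icc a b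
      = Set.Icc (f₀ π00 π01 π10 π11 ε a) (f₀ π00 π01 π10 π11 ε b) := by
  apply Set.Subset.antisymm
  · rintro y ⟨x, hx, rfl⟩
    exact ⟨S.f0_mono_le ha.le hx.1, S.f0_mono_le (ha.le.trans hx.1) hx.2⟩
  · exact intermediate_value_Icc hab (S.f0_continuousOn.mono
      (fun x hx => le_trans ha.le hx.1))

lemma f1_image {a b : ℝ} (ha : 0 < a) (hab : a ≤ b) :
    f₁ π00 π01 π10 π11 ε '' Set.Icc a b
      = Set.Icc (f₁ π00 π01 π10 π11 ε a) (f₁ π00 π01 π10 π11 ε b) := by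
  apply Set.Subset.antisymm
  · rintro y ⟨x, hx, rfl⟩
    exact ⟨S.f1_mono_le ha.le hx.1, S.f1_mono_le (ha.le.trans hx.1) hx.2⟩
  · exact intermediate_value_Icc hab (S.f1_continuousOn.mono
      (fun x hx => le_trans ha.le hx.1))

end Hyp
end BWProof
namespace BWProof

open Set MeasureTheory
open scoped ENNReal

noncomputable def EU1 : ℝ → ℝ≥0∞ := fun x => ENNReal.ofReal (x / (x + 1))
noncomputable def EU2 : ℝ → ℝ≥0∞ := fun x => ENNReal.ofReal (1 / (x + 1))

lemma EU1_meas : Measurable EU1 := eu1_measurable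
lemma EU2_meas : Measurable EU2 := eu2_measurable

lemma EU1_def (x : ℝ) : EU1 x = ENNReal.ofReal (x / (x + 1)) := rfl
lemma EU2_def (x : ℝ) : EU2 x = ENNReal.ofReal (1 / (x + 1)) := rfl

lemma EU_sum {x : ℝ} (hx : 0 < x) : EU1 x + EU2 x = 1 := by
  rw [EU1_def, EU2_def, ← ENNReal.ofReal_add (by positivity) (by positivity),
    ← add_div, div_self (by linarith : x + 1 ≠ 0), ENNReal.ofReal_one]

section Main

variable {π00 π01 π10 π11 ε p₀ p₁ : ℝ}
variable (S : Hyp π00 π01 π10 π11 ε p₀ p₁)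
variable (Q : Measure ℝ) [IsProbabilityMeasure Q]
variable (hQpos : Q (Set.Ioi 0) = 1)
variable (hQinv : BlackwellInvariant π00 π01 π10 π11 ε Q)

local notation "F0" => f₀ π00 π01 π10 π11 ε
local notation "F1" => f₁ π00 π01 π10 π11 ε
local notation "R0" => fun x => ENNReal.ofReal (r₀ π00 π01 π10 π11 ε x)
local notation "R1" => fun x => ENNReal.ofReal (r₁ π00 π01 π10 π11 ε x)

lemma distribute (s : Set ℝ) (c c1 c2 : ℝ≥0∞) :
    ∫⁻ x in s, c * (c1 * EU1 x + c2 * EU2 x) ∂Q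
      = c * (c1 * (∫⁻ x in s, EU1 x ∂Q) + c2 * ∫⁻ x in s, EU2 x ∂Q) := by
  rw [lintegral_const_mul (f := fun x => c1 * EU1 x + c2 * EU2 x) _ ((measurable_const.mul EU1_meas).add
      (measurable_const.mul EU2_meas)),
    lintegral_add_left (f := fun x => c1 * EU1 x) (measurable_const.mul EU1_meas),
    lintegral_const_mul _ EU1_meas, lintegral_const_mul _ EU2_meas]

include S hQpos hQinv in
lemma step_f0 {a b : ℝ} (ha : p₁ ≤ a) (hab : a ≤ b) (hb : b ≤ p₀) :
    ((∫⁻ x in Set.Icc (f₀ π00 π01 π10 π11 ε a) (f₀ π00 π01 π10 π11 ε b), EU1 x ∂Q)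
      = ENNReal.ofReal (1 - ε) * (ENNReal.ofReal π00 * (∫⁻ x in Set.Icc a b, EU1 x ∂Q)
          + ENNReal.ofReal π10 * ∫⁻ x in Set.Icc a b, EU2 x ∂Q))
    ∧ ((∫⁻ x in Set.Icc (f₀ π00 π01 π10 π11 ε a) (f₀ π00 π01 π10 π11 ε b), EU2 x ∂Q)
      = ENNReal.ofReal ε * (ENNReal.ofReal π01 * (∫⁻ x in Set.Icc a b, EU1 x ∂Q)
          + ENNReal.ofReal π11 * ∫⁻ x in Set.Icc a b, EU2 x ∂Q)) := by
  have ha0 : 0 < a := lt_of_lt_of_le S.hp₁ ha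
  have hfa : 0 < f₀ π00 π01 π10 π11 ε a := S.f0_pos ha0.le
  have haeIcc := ae_mem_Icc S Q hQpos hQinv
  constructor
  · -- EU1 goal
    set g := (Set.Icc (f₀ π00 π01 π10 π11 ε a) (f₀ π00 π01 π10 π11 ε b)).indicator EU1 with hg
    have hgm : Measurable g := EU1_meas.indicator measurableSet_Icc
    have hg0 : ∀ x : ℝ, x ≤ 0 → g x = 0 := by
      intro x hx
      apply Set.indicator_of_notMem
      intro hmem
      exact absurd (lt_of_lt_of_le hfa hmem.1) (not_lt.mpr hx)
    have hfun := inv_fun Q hQinv g hgm hg0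
    have hLHS : ∫⁻ x, g x ∂Q
        = ∫⁻ x in Set.Icc (f₀ π00 π01 π10 π11 ε a) (f₀ π00 π01 π10 π11 ε b), EU1 x ∂Q :=
      lintegral_indicator measurableSet_Icc _
    have hT1 : ∫⁻ x, g (F1 x) * ENNReal.ofReal (r₁ π00 π01 π10 π11 ε x) ∂Q = 0 := by
      have hcong : (fun x => g (F1 x) * ENNReal.ofReal (r₁ π00 π01 π10 π11 ε x))
          =ᵐ[Q] (fun _ => 0) := by
        filter_upwards [haeIcc] with x hx
        have hnm : F1 x ∉ Set.Icc (f₀ π00 π01 π10 π11 ε a) (f₀ π00 π01 π10 π11 ε b) := by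
          intro hmem
          have h3 : f₁ π00 π01 π10 π11 ε x ≤ f₁ π00 π01 π10 π11 ε p₀ :=
            S.f1_mono_le (le_trans S.hp₁.le hx.1) hx.2
          have h4 : f₀ π00 π01 π10 π11 ε p₁ ≤ f₀ π00 π01 π10 π11 ε a :=
            S.f0_mono_le S.hp₁.le ha
          have h5 := S.hnov
          have h6 := hmem.1
          linarith
        rw [hg, Set.indicator_of_notMem hnm, zero_mul]
      rw [lintegral_congr_ae hcong, lintegral_zero]
    have hT0 : ∫⁻ x, g (F0 x) * ENNReal.ofReal (r₀ π00 π01 π10 π11 ε x) ∂Q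
        = ∫⁻ x, (Set.Icc a b).indicator
            (fun x => ENNReal.ofReal (1 - ε) * (ENNReal.ofReal π00 * EU1 x
              + ENNReal.ofReal π10 * EU2 x)) x ∂Q := by
      apply lintegral_congr_ae
      filter_upwards [haeIcc] with x hx
      have hx0 : 0 < x := lt_of_lt_of_le S.hp₁ hx.1
      by_cases hxab : x ∈ Set.Icc a b
      · have hmem : F0 x ∈ Set.Icc (f₀ π00 π01 π10 π11 ε a) (f₀ π00 π01 π10 π11 ε b) :=
          ⟨S.f0_mono_le ha0.le hxab.1, S.f0_mono_le (ha0.le.trans hxab.1) hxab.2⟩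
        rw [hg, Set.indicator_of_mem hmem, Set.indicator_of_mem hxab]
        exact S.eid_f0_u1 hx0
      · have hnm : F0 x ∉ Set.Icc (f₀ π00 π01 π10 π11 ε a) (f₀ π00 π01 π10 π11 ε b) := by
          intro hmem
          rcases not_and_or.mp hxab with h | h
          · have := S.f0_mono hx0.le (not_le.mp h)
            exact absurd hmem.1 (not_le.mpr this)
          · have := S.f0_mono (ha0.le.trans hab) (not_le.mp h)
            exact absurd hmem.2 (not_le.mpr this)
        rw [hg, Set.indicator_of_notMem hnm, Set.indicator_of_notMem hxab, zero_mul]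
    rw [← hLHS, hfun, hT0, hT1, add_zero, lintegral_indicator measurableSet_Icc,
      distribute Q]
  · -- EU2 goal
    set g := (Set.Icc (f₀ π00 π01 π10 π11 ε a) (f₀ π00 π01 π10 π11 ε b)).indicator EU2 with hg
    have hgm : Measurable g := EU2_meas.indicator measurableSet_Icc
    have hg0 : ∀ x : ℝ, x ≤ 0 → g x = 0 := by
      intro x hx
      apply Set.indicator_of_notMem
      intro hmem
      exact absurd (lt_of_lt_of_le hfa hmem.1) (not_lt.mpr hx)
    have hfun := inv_fun Q hQinv g hgm hg0
    have hLHS : ∫⁻ x, g x ∂Q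
        = ∫⁻ x in Set.Icc (f₀ π00 π01 π10 π11 ε a) (f₀ π00 π01 π10 π11 ε b), EU2 x ∂Q :=
      lintegral_indicator measurableSet_Icc _
    have hT1 : ∫⁻ x, g (F1 x) * ENNReal.ofReal (r₁ π00 π01 π10 π11 ε x) ∂Q = 0 := by
      have hcong : (fun x => g (F1 x) * ENNReal.ofReal (r₁ π00 π01 π10 π11 ε x))
          =ᵐ[Q] (fun _ => 0) := by
        filter_upwards [haeIcc] with x hx
        have hnm : F1 x ∉ Set.Icc (f₀ π00 π01 π10 π11 ε a) (f₀ π00 π01 π10 π11 ε b) := by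
          intro hmem
          have h3 : f₁ π00 π01 π10 π11 ε x ≤ f₁ π00 π01 π10 π11 ε p₀ :=
            S.f1_mono_le (le_trans S.hp₁.le hx.1) hx.2
          have h4 : f₀ π00 π01 π10 π11 ε p₁ ≤ f₀ π00 π01 π10 π11 ε a :=
            S.f0_mono_le S.hp₁.le ha
          have h5 := S.hnov
          have h6 := hmem.1
          linarith
        rw [hg, Set.indicator_of_notMem hnm, zero_mul]
      rw [lintegral_congr_ae hcong, lintegral_zero]
    have hT0 : ∫⁻ x, g (F0 x) * ENNReal.ofReal (r₀ π00 π01 π10 π11 ε x) ∂Q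
        = ∫⁻ x, (Set.Icc a b).indicator
            (fun x => ENNReal.ofReal ε * (ENNReal.ofReal π01 * EU1 x
              + ENNReal.ofReal π11 * EU2 x)) x ∂Q := by
      apply lintegral_congr_ae
      filter_upwards [haeIcc] with x hx
      have hx0 : 0 < x := lt_of_lt_of_le S.hp₁ hx.1
      by_cases hxab : x ∈ Set.Icc a b
      · have hmem : F0 x ∈ Set.Icc (f₀ π00 π01 π10 π11 ε a) (f₀ π00 π01 π10 π11 ε b) :=
          ⟨S.f0_mono_le ha0.le hxab.1, S.f0_mono_le (ha0.le.trans hxab.1) hxab.2⟩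
        rw [hg, Set.indicator_of_mem hmem, Set.indicator_of_mem hxab]
        exact S.eid_f0_u2 hx0
      · have hnm : F0 x ∉ Set.Icc (f₀ π00 π01 π10 π11 ε a) (f₀ π00 π01 π10 π11 ε b) := by
          intro hmem
          rcases not_and_or.mp hxab with h | h
          · have := S.f0_mono hx0.le (not_le.mp h)
            exact absurd hmem.1 (not_le.mpr this)
          · have := S.f0_mono (ha0.le.trans hab) (not_le.mp h)
            exact absurd hmem.2 (not_le.mpr this)
        rw [hg, Set.indicator_of_notMem hnm, Set.indicator_of_notMem hxab, zero_mul]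
    rw [← hLHS, hfun, hT0, hT1, add_zero, lintegral_indicator measurableSet_Icc,
      distribute Q]

include S hQpos hQinv in
lemma step_f1 {a b : ℝ} (ha : p₁ ≤ a) (hab : a ≤ b) (hb : b ≤ p₀) :
    ((∫⁻ x in Set.Icc (f₁ π00 π01 π10 π11 ε a) (f₁ π00 π01 π10 π11 ε b), EU1 x ∂Q)
      = ENNReal.ofReal ε * (ENNReal.ofReal π00 * (∫⁻ x in Set.Icc a b, EU1 x ∂Q)
          + ENNReal.ofReal π10 * ∫⁻ x in Set.Icc a b, EU2 x ∂Q))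
    ∧ ((∫⁻ x in Set.Icc (f₁ π00 π01 π10 π11 ε a) (f₁ π00 π01 π10 π11 ε b), EU2 x ∂Q)
      = ENNReal.ofReal (1 - ε) * (ENNReal.ofReal π01 * (∫⁻ x in Set.Icc a b, EU1 x ∂Q)
          + ENNReal.ofReal π11 * ∫⁻ x in Set.Icc a b, EU2 x ∂Q)) := by
  have ha0 : 0 < a := lt_of_lt_of_le S.hp₁ ha
  have hfa : 0 < f₁ π00 π01 π10 π11 ε a := S.f1_pos ha0.le
  have haeIcc := ae_mem_Icc S Q hQpos hQinv
  constructor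
  · set g := (Set.Icc (f₁ π00 π01 π10 π11 ε a) (f₁ π00 π01 π10 π11 ε b)).indicator EU1 with hg
    have hgm : Measurable g := EU1_meas.indicator measurableSet_Icc
    have hg0 : ∀ x : ℝ, x ≤ 0 → g x = 0 := by
      intro x hx
      apply Set.indicator_of_notMem
      intro hmem
      exact absurd (lt_of_lt_of_le hfa hmem.1) (not_lt.mpr hx)
    have hfun := inv_fun Q hQinv g hgm hg0
    have hLHS : ∫⁻ x, g x ∂Q
        = ∫⁻ x in Set.Icc (f₁ π00 π01 π10 π11 ε a) (f₁ π00 π01 π10 π11 ε b), EU1 x ∂Q :=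
      lintegral_indicator measurableSet_Icc _
    have hT0 : ∫⁻ x, g (F0 x) * ENNReal.ofReal (r₀ π00 π01 π10 π11 ε x) ∂Q = 0 := by
      have hcong : (fun x => g (F0 x) * ENNReal.ofReal (r₀ π00 π01 π10 π11 ε x))
          =ᵐ[Q] (fun _ => 0) := by
        filter_upwards [haeIcc] with x hx
        have hnm : F0 x ∉ Set.Icc (f₁ π00 π01 π10 π11 ε a) (f₁ π00 π01 π10 π11 ε b) := by
          intro hmem
          have h3 : f₀ π00 π01 π10 π11 ε p₁ ≤ f₀ π00 π01 π10 π11 ε x :=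
            S.f0_mono_le S.hp₁.le hx.1
          have h4 : f₁ π00 π01 π10 π11 ε b ≤ f₁ π00 π01 π10 π11 ε p₀ :=
            S.f1_mono_le (ha0.le.trans hab) hb
          have h5 := S.hnov
          have h6 := hmem.2
          linarith
        rw [hg, Set.indicator_of_notMem hnm, zero_mul]
      rw [lintegral_congr_ae hcong, lintegral_zero]
    have hT1 : ∫⁻ x, g (F1 x) * ENNReal.ofReal (r₁ π00 π01 π10 π11 ε x) ∂Q
        = ∫⁻ x, (Set.Icc a b).indicator
            (fun x => ENNReal.ofReal ε * (ENNReal.ofReal π00 * EU1 x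
              + ENNReal.ofReal π10 * EU2 x)) x ∂Q := by
      apply lintegral_congr_ae
      filter_upwards [haeIcc] with x hx
      have hx0 : 0 < x := lt_of_lt_of_le S.hp₁ hx.1
      by_cases hxab : x ∈ Set.Icc a b
      · have hmem : F1 x ∈ Set.Icc (f₁ π00 π01 π10 π11 ε a) (f₁ π00 π01 π10 π11 ε b) :=
          ⟨S.f1_mono_le ha0.le hxab.1, S.f1_mono_le (ha0.le.trans hxab.1) hxab.2⟩
        rw [hg, Set.indicator_of_mem hmem, Set.indicator_of_mem hxab]
        exact S.eid_f1_u1 hx0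
      · have hnm : F1 x ∉ Set.Icc (f₁ π00 π01 π10 π11 ε a) (f₁ π00 π01 π10 π11 ε b) := by
          intro hmem
          rcases not_and_or.mp hxab with h | h
          · have := S.f1_mono hx0.le (not_le.mp h)
            exact absurd hmem.1 (not_le.mpr this)
          · have := S.f1_mono (ha0.le.trans hab) (not_le.mp h)
            exact absurd hmem.2 (not_le.mpr this)
        rw [hg, Set.indicator_of_notMem hnm, Set.indicator_of_notMem hxab, zero_mul]
    rw [← hLHS, hfun, hT0, hT1, zero_add, lintegral_indicator measurableSet_Icc,
      distribute Q]
  · set g := (Set.Icc (f₁ π00 π01 π10 π11 ε a) (f₁ π00 π01 π10 π11 ε b)).indicator EU2 with hg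
    have hgm : Measurable g := EU2_meas.indicator measurableSet_Icc
    have hg0 : ∀ x : ℝ, x ≤ 0 → g x = 0 := by
      intro x hx
      apply Set.indicator_of_notMem
      intro hmem
      exact absurd (lt_of_lt_of_le hfa hmem.1) (not_lt.mpr hx)
    have hfun := inv_fun Q hQinv g hgm hg0
    have hLHS : ∫⁻ x, g x ∂Q
        = ∫⁻ x in Set.Icc (f₁ π00 π01 π10 π11 ε a) (f₁ π00 π01 π10 π11 ε b), EU2 x ∂Q :=
      lintegral_indicator measurableSet_Icc _
    have hT0 : ∫⁻ x, g (F0 x) * ENNReal.ofReal (r₀ π00 π01 π10 π11 ε x) ∂Q = 0 := by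
      have hcong : (fun x => g (F0 x) * ENNReal.ofReal (r₀ π00 π01 π10 π11 ε x))
          =ᵐ[Q] (fun _ => 0) := by
        filter_upwards [haeIcc] with x hx
        have hnm : F0 x ∉ Set.Icc (f₁ π00 π01 π10 π11 ε a) (f₁ π00 π01 π10 π11 ε b) := by
          intro hmem
          have h3 : f₀ π00 π01 π10 π11 ε p₁ ≤ f₀ π00 π01 π10 π11 ε x :=
            S.f0_mono_le S.hp₁.le hx.1
          have h4 : f₁ π00 π01 π10 π11 ε b ≤ f₁ π00 π01 π10 π11 ε p₀ :=
            S.f1_mono_le (ha0.le.trans hab) hb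
          have h5 := S.hnov
          have h6 := hmem.2
          linarith
        rw [hg, Set.indicator_of_notMem hnm, zero_mul]
      rw [lintegral_congr_ae hcong, lintegral_zero]
    have hT1 : ∫⁻ x, g (F1 x) * ENNReal.ofReal (r₁ π00 π01 π10 π11 ε x) ∂Q
        = ∫⁻ x, (Set.Icc a b).indicator
            (fun x => ENNReal.ofReal (1 - ε) * (ENNReal.ofReal π01 * EU1 x
              + ENNReal.ofReal π11 * EU2 x)) x ∂Q := by
      apply lintegral_congr_ae
      filter_upwards [haeIcc] with x hx
      have hx0 : 0 < x := lt_of_lt_of_le S.hp₁ hx.1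
      by_cases hxab : x ∈ Set.Icc a b
      · have hmem : F1 x ∈ Set.Icc (f₁ π00 π01 π10 π11 ε a) (f₁ π00 π01 π10 π11 ε b) :=
          ⟨S.f1_mono_le ha0.le hxab.1, S.f1_mono_le (ha0.le.trans hxab.1) hxab.2⟩
        rw [hg, Set.indicator_of_mem hmem, Set.indicator_of_mem hxab]
        exact S.eid_f1_u2 hx0
      · have hnm : F1 x ∉ Set.Icc (f₁ π00 π01 π10 π11 ε a) (f₁ π00 π01 π10 π11 ε b) := by
          intro hmem
          rcases not_and_or.mp hxab with h | h
          · have := S.f1_mono hx0.le (not_le.mp h)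
            exact absurd hmem.1 (not_le.mpr this)
          · have := S.f1_mono (ha0.le.trans hab) (not_le.mp h)
            exact absurd hmem.2 (not_le.mpr this)
        rw [hg, Set.indicator_of_notMem hnm, Set.indicator_of_notMem hxab, zero_mul]
    rw [← hLHS, hfun, hT0, hT1, zero_add, lintegral_indicator measurableSet_Icc,
      distribute Q]

end Main
end BWProof
namespace BWProof

open Set MeasureTheory
open scoped ENNReal

section Base

variable {π00 π01 π10 π11 ε p₀ p₁ : ℝ}
variable (S : Hyp π00 π01 π10 π11 ε p₀ p₁)
variable (Q : Measure ℝ) [IsProbabilityMeasure Q]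
variable (hQpos : Q (Set.Ioi 0) = 1)
variable (hQinv : BlackwellInvariant π00 π01 π10 π11 ε Q)

local notation "F0" => f₀ π00 π01 π10 π11 ε
local notation "F1" => f₁ π00 π01 π10 π11 ε

include S hQpos hQinv in
lemma base_sum : (∫⁻ x in Set.Icc p₁ p₀, EU1 x ∂Q) + ∫⁻ x in Set.Icc p₁ p₀, EU2 x ∂Q = 1 := by
  rw [← lintegral_add_left EU1_meas]
  have h : ∀ x ∈ Set.Icc p₁ p₀, EU1 x + EU2 x = 1 := fun x hx =>
    EU_sum (lt_of_lt_of_le S.hp₁ hx.1)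
  rw [setLIntegral_congr_fun measurableSet_Icc h,
    setLIntegral_one, Q_Icc_one S Q hQpos hQinv]

include S hQpos hQinv in
lemma base_A_ne_top : (∫⁻ x in Set.Icc p₁ p₀, EU1 x ∂Q) ≠ ⊤ := by
  have h := base_sum S Q hQpos hQinv
  have : (∫⁻ x in Set.Icc p₁ p₀, EU1 x ∂Q) ≤ 1 := le_trans le_self_add h.le
  exact (lt_of_le_of_lt this ENNReal.one_lt_top).ne

include S hQpos hQinv in
lemma base_B_ne_top : (∫⁻ x in Set.Icc p₁ p₀, EU2 x ∂Q) ≠ ⊤ := by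
  have h := base_sum S Q hQpos hQinv
  have : (∫⁻ x in Set.Icc p₁ p₀, EU2 x ∂Q) ≤ 1 := le_trans le_add_self h.le
  exact (lt_of_le_of_lt this ENNReal.one_lt_top).ne

include S hQpos hQinv in
lemma base_eqn_A :
    (∫⁻ x in Set.Icc p₁ p₀, EU1 x ∂Q)
      = ENNReal.ofReal π00 * (∫⁻ x in Set.Icc p₁ p₀, EU1 x ∂Q)
        + ENNReal.ofReal π10 * ∫⁻ x in Set.Icc p₁ p₀, EU2 x ∂Q := by
  have haeIcc := ae_mem_Icc S Q hQpos hQinv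
  set g := (Set.Ioi (0:ℝ)).indicator EU1 with hg
  have hgm : Measurable g := EU1_meas.indicator measurableSet_Ioi
  have hg0 : ∀ x : ℝ, x ≤ 0 → g x = 0 := by
    intro x hx
    exact Set.indicator_of_notMem (by simpa using hx) _
  have hfun := inv_fun Q hQinv g hgm hg0
  have hLHS : ∫⁻ x, g x ∂Q = ∫⁻ x in Set.Icc p₁ p₀, EU1 x ∂Q := by
    have hcong : g =ᵐ[Q] (Set.Icc p₁ p₀).indicator EU1 := by
      filter_upwards [haeIcc] with x hx
      rw [hg, Set.indicator_of_mem hx,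
        Set.indicator_of_mem (Set.mem_Ioi.mpr (lt_of_lt_of_le S.hp₁ hx.1))]
    rw [lintegral_congr_ae hcong, lintegral_indicator measurableSet_Icc]
  have hT0 : ∫⁻ x, g (F0 x) * ENNReal.ofReal (r₀ π00 π01 π10 π11 ε x) ∂Q
      = ∫⁻ x, (Set.Icc p₁ p₀).indicator
          (fun x => ENNReal.ofReal (1 - ε) * (ENNReal.ofReal π00 * EU1 x
            + ENNReal.ofReal π10 * EU2 x)) x ∂Q := by
    apply lintegral_congr_ae
    filter_upwards [haeIcc] with x hx
    have hx0 : 0 < x := lt_of_lt_of_le S.hp₁ hx.1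
    rw [hg, Set.indicator_of_mem (Set.mem_Ioi.mpr (S.f0_pos hx0.le)),
      Set.indicator_of_mem hx]
    exact S.eid_f0_u1 hx0
  have hT1 : ∫⁻ x, g (F1 x) * ENNReal.ofReal (r₁ π00 π01 π10 π11 ε x) ∂Q
      = ∫⁻ x, (Set.Icc p₁ p₀).indicator
          (fun x => ENNReal.ofReal ε * (ENNReal.ofReal π00 * EU1 x
            + ENNReal.ofReal π10 * EU2 x)) x ∂Q := by
    apply lintegral_congr_ae
    filter_upwards [haeIcc] with x hx
    have hx0 : 0 < x := lt_of_lt_of_le S.hp₁ hx.1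
    rw [hg, Set.indicator_of_mem (Set.mem_Ioi.mpr (S.f1_pos hx0.le)),
      Set.indicator_of_mem hx]
    exact S.eid_f1_u1 hx0
  have key : (∫⁻ x in Set.Icc p₁ p₀, EU1 x ∂Q)
      = ENNReal.ofReal (1 - ε) * (ENNReal.ofReal π00 * (∫⁻ x in Set.Icc p₁ p₀, EU1 x ∂Q)
          + ENNReal.ofReal π10 * ∫⁻ x in Set.Icc p₁ p₀, EU2 x ∂Q)
        + ENNReal.ofReal ε * (ENNReal.ofReal π00 * (∫⁻ x in Set.Icc p₁ p₀, EU1 x ∂Q)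
          + ENNReal.ofReal π10 * ∫⁻ x in Set.Icc p₁ p₀, EU2 x ∂Q) := by
    conv_lhs => rw [← hLHS, hfun]
    rw [hT0, hT1, lintegral_indicator measurableSet_Icc,
      lintegral_indicator measurableSet_Icc, distribute Q, distribute Q]
  have h2 : ENNReal.ofReal (1 - ε) + ENNReal.ofReal ε = 1 := by
    rw [← ENNReal.ofReal_add S.hε1.le S.hε0.le]
    norm_num
  conv_lhs => rw [key]
  rw [← add_mul, h2, one_mul]

include S hQpos hQinv in
lemma base_eqn_B :
    (∫⁻ x in Set.Icc p₁ p₀, EU2 x ∂Q)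
      = ENNReal.ofReal π01 * (∫⁻ x in Set.Icc p₁ p₀, EU1 x ∂Q)
        + ENNReal.ofReal π11 * ∫⁻ x in Set.Icc p₁ p₀, EU2 x ∂Q := by
  have haeIcc := ae_mem_Icc S Q hQpos hQinv
  set g := (Set.Ioi (0:ℝ)).indicator EU2 with hg
  have hgm : Measurable g := EU2_meas.indicator measurableSet_Ioi
  have hg0 : ∀ x : ℝ, x ≤ 0 → g x = 0 := by
    intro x hx
    exact Set.indicator_of_notMem (by simpa using hx) _
  have hfun := inv_fun Q hQinv g hgm hg0
  have hLHS : ∫⁻ x, g x ∂Q = ∫⁻ x in Set.Icc p₁ p₀, EU2 x ∂Q := by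
    have hcong : g =ᵐ[Q] (Set.Icc p₁ p₀).indicator EU2 := by
      filter_upwards [haeIcc] with x hx
      rw [hg, Set.indicator_of_mem hx,
        Set.indicator_of_mem (Set.mem_Ioi.mpr (lt_of_lt_of_le S.hp₁ hx.1))]
    rw [lintegral_congr_ae hcong, lintegral_indicator measurableSet_Icc]
  have hT0 : ∫⁻ x, g (F0 x) * ENNReal.ofReal (r₀ π00 π01 π10 π11 ε x) ∂Q
      = ∫⁻ x, (Set.Icc p₁ p₀).indicator
          (fun x => ENNReal.ofReal ε * (ENNReal.ofReal π01 * EU1 x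
            + ENNReal.ofReal π11 * EU2 x)) x ∂Q := by
    apply lintegral_congr_ae
    filter_upwards [haeIcc] with x hx
    have hx0 : 0 < x := lt_of_lt_of_le S.hp₁ hx.1
    rw [hg, Set.indicator_of_mem (Set.mem_Ioi.mpr (S.f0_pos hx0.le)),
      Set.indicator_of_mem hx]
    exact S.eid_f0_u2 hx0
  have hT1 : ∫⁻ x, g (F1 x) * ENNReal.ofReal (r₁ π00 π01 π10 π11 ε x) ∂Q
      = ∫⁻ x, (Set.Icc p₁ p₀).indicator
          (fun x => ENNReal.ofReal (1 - ε) * (ENNReal.ofReal π01 * EU1 x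
            + ENNReal.ofReal π11 * EU2 x)) x ∂Q := by
    apply lintegral_congr_ae
    filter_upwards [haeIcc] with x hx
    have hx0 : 0 < x := lt_of_lt_of_le S.hp₁ hx.1
    rw [hg, Set.indicator_of_mem (Set.mem_Ioi.mpr (S.f1_pos hx0.le)),
      Set.indicator_of_mem hx]
    exact S.eid_f1_u2 hx0
  have key : (∫⁻ x in Set.Icc p₁ p₀, EU2 x ∂Q)
      = ENNReal.ofReal ε * (ENNReal.ofReal π01 * (∫⁻ x in Set.Icc p₁ p₀, EU1 x ∂Q)
          + ENNReal.ofReal π11 * ∫⁻ x in Set.Icc p₁ p₀, EU2 x ∂Q)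
        + ENNReal.ofReal (1 - ε) * (ENNReal.ofReal π01 * (∫⁻ x in Set.Icc p₁ p₀, EU1 x ∂Q)
          + ENNReal.ofReal π11 * ∫⁻ x in Set.Icc p₁ p₀, EU2 x ∂Q) := by
    conv_lhs => rw [← hLHS, hfun]
    rw [hT0, hT1, lintegral_indicator measurableSet_Icc,
      lintegral_indicator measurableSet_Icc, distribute Q, distribute Q]
  have h2 : ENNReal.ofReal ε + ENNReal.ofReal (1 - ε) = 1 := by
    rw [← ENNReal.ofReal_add S.hε0.le S.hε1.le]
    norm_num
  conv_lhs => rw [key]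
  rw [← add_mul, h2, one_mul]

include S hQpos hQinv in
lemma base_values :
    (∫⁻ x in Set.Icc p₁ p₀, EU1 x ∂Q) = ENNReal.ofReal (π10 / (π01 + π10))
    ∧ (∫⁻ x in Set.Icc p₁ p₀, EU2 x ∂Q) = ENNReal.ofReal (π01 / (π01 + π10)) := by
  set A := ∫⁻ x in Set.Icc p₁ p₀, EU1 x ∂Q with hA
  set B := ∫⁻ x in Set.Icc p₁ p₀, EU2 x ∂Q with hB
  have hAt : A ≠ ⊤ := by rw [hA]; exact base_A_ne_top S Q hQpos hQinv
  have hBt : B ≠ ⊤ := by rw [hB]; exact base_B_ne_top S Q hQpos hQinv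
  set α := A.toReal with hα
  set β := B.toReal with hβ
  have hαnn : 0 ≤ α := ENNReal.toReal_nonneg
  have hβnn : 0 ≤ β := ENNReal.toReal_nonneg
  have hab : α + β = 1 := by
    have h := congrArg ENNReal.toReal (base_sum S Q hQpos hQinv)
    rw [← hA, ← hB] at h
    rwa [ENNReal.toReal_add hAt hBt, ENNReal.toReal_one] at h
  have hAeq : α = π00 * α + π10 * β := by
    have h := congrArg ENNReal.toReal (base_eqn_A S Q hQpos hQinv)
    rw [← hA, ← hB] at h
    rwa [ENNReal.toReal_add (ENNReal.mul_ne_top ENNReal.ofReal_ne_top hAt)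
        (ENNReal.mul_ne_top ENNReal.ofReal_ne_top hBt),
      ENNReal.toReal_mul, ENNReal.toReal_mul,
      ENNReal.toReal_ofReal S.h00.le, ENNReal.toReal_ofReal S.h10.le] at h
  have hsum : 0 < π01 + π10 := add_pos S.h01 S.h10
  have hαmul : α * (π01 + π10) = π10 := by
    linear_combination hAeq + π10 * hab + α * S.hrow0
  have hαval : α = π10 / (π01 + π10) := by
    rw [eq_div_iff hsum.ne']
    exact hαmul
  have hβval : β = π01 / (π01 + π10) := by
    rw [eq_div_iff hsum.ne']
    linear_combination (π01 + π10) * hab - hαmul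
  constructor
  · rw [← ENNReal.ofReal_toReal hAt, ← hα, hαval]
  · rw [← ENNReal.ofReal_toReal hBt, ← hβ, hβval]

end Base
end BWProof
namespace BWProof

open Set MeasureTheory
open scoped ENNReal

section Lists

variable {π00 π01 π10 π11 ε p₀ p₁ : ℝ}

lemma fb_false : fb π00 π01 π10 π11 ε false = f₀ π00 π01 π10 π11 ε := rfl

lemma fb_true : fb π00 π01 π10 π11 ε true = f₁ π00 π01 π10 π11 ε := rfl

lemma wordPQ_nil : wordPQ π00 π01 π10 π11 ε []
    = (π10 / (π01 + π10), π01 / (π01 + π10)) := rfl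

lemma wordPQ_append (w : List Bool) (i : Bool) :
    wordPQ π00 π01 π10 π11 ε (w ++ [i])
      = ((if i then ε else 1 - ε)
            * (π00 * (wordPQ π00 π01 π10 π11 ε w).1 + π10 * (wordPQ π00 π01 π10 π11 ε w).2),
         (if i then 1 - ε else ε)
            * (π01 * (wordPQ π00 π01 π10 π11 ε w).1 + π11 * (wordPQ π00 π01 π10 π11 ε w).2)) := by
  unfold wordPQ
  rw [List.foldl_append]
  rfl

lemma wordInterval_append (w : List Bool) (i : Bool) :
    wordInterval π00 π01 π10 π11 ε p₀ p₁ (w ++ [i])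
      = fb π00 π01 π10 π11 ε i '' wordInterval π00 π01 π10 π11 ε p₀ p₁ w := by
  unfold wordInterval
  rw [List.foldl_append]
  rfl

lemma wordPQ_nonneg_aux (S : Hyp π00 π01 π10 π11 ε p₀ p₁) :
    ∀ (w : List Bool) (p : ℝ × ℝ), 0 ≤ p.1 → 0 ≤ p.2 →
      0 ≤ (w.foldl
        (fun ab i =>
          ((if i then ε else 1 - ε) * (π00 * ab.1 + π10 * ab.2),
           (if i then 1 - ε else ε) * (π01 * ab.1 + π11 * ab.2))) p).1
      ∧ 0 ≤ (w.foldl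
        (fun ab i =>
          ((if i then ε else 1 - ε) * (π00 * ab.1 + π10 * ab.2),
           (if i then 1 - ε else ε) * (π01 * ab.1 + π11 * ab.2))) p).2 := by
  intro w
  induction w with
  | nil => intro p h1 h2; exact ⟨h1, h2⟩
  | cons i w ih =>
    intro p h1 h2
    rw [List.foldl_cons]
    apply ih
    · apply mul_nonneg
      · rcases i with _ | _ <;> simp <;> [linarith [S.hε1]; exact S.hε0.le]
      · exact add_nonneg (mul_nonneg S.h00.le h1) (mul_nonneg S.h10.le h2)
    · apply mul_nonneg
      · rcases i with _ | _ <;> simp <;> [exact S.hε0.le; linarith [S.hε1]]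
      · exact add_nonneg (mul_nonneg S.h01.le h1) (mul_nonneg S.h11.le h2)

lemma wordPQ_nonneg (S : Hyp π00 π01 π10 π11 ε p₀ p₁) (w : List Bool) :
    0 ≤ (wordPQ π00 π01 π10 π11 ε w).1 ∧ 0 ≤ (wordPQ π00 π01 π10 π11 ε w).2 := by
  have hsum : 0 < π01 + π10 := add_pos S.h01 S.h10
  exact wordPQ_nonneg_aux S w _ (div_nonneg S.h10.le hsum.le) (div_nonneg S.h01.le hsum.le)

end Lists

section MainInv

variable {π00 π01 π10 π11 ε p₀ p₁ : ℝ}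
variable (S : Hyp π00 π01 π10 π11 ε p₀ p₁)
variable (Q : Measure ℝ) [IsProbabilityMeasure Q]
variable (hQpos : Q (Set.Ioi 0) = 1)
variable (hQinv : BlackwellInvariant π00 π01 π10 π11 ε Q)

include S hQpos hQinv in
lemma main_inv (w : List Bool) : ∃ a b : ℝ, p₁ ≤ a ∧ a ≤ b ∧ b ≤ p₀ ∧
    wordInterval π00 π01 π10 π11 ε p₀ p₁ w = Set.Icc a b ∧
    (∫⁻ x in Set.Icc a b, EU1 x ∂Q) = ENNReal.ofReal (wordPQ π00 π01 π10 π11 ε w).1 ∧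
    (∫⁻ x in Set.Icc a b, EU2 x ∂Q) = ENNReal.ofReal (wordPQ π00 π01 π10 π11 ε w).2 := by
  induction w using List.reverseRecOn with
  | nil =>
    refine ⟨p₁, p₀, le_rfl, S.p1_lt_p0.le, le_rfl, rfl, ?_, ?_⟩
    · rw [wordPQ_nil]
      exact (base_values S Q hQpos hQinv).1
    · rw [wordPQ_nil]
      exact (base_values S Q hQpos hQinv).2
  | append_singleton w i ih =>
    obtain ⟨a, b, ha, hab, hb, hInt, hA, hB⟩ := ih
    have ha0 : 0 < a := lt_of_lt_of_le S.hp₁ ha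
    obtain ⟨hp, hq⟩ := wordPQ_nonneg S w
    rw [wordInterval_append, hInt, wordPQ_append]
    cases i
    · -- false : f₀
      have himg : fb π00 π01 π10 π11 ε false '' Set.Icc a b
          = Set.Icc (f₀ π00 π01 π10 π11 ε a) (f₀ π00 π01 π10 π11 ε b) := by
        rw [fb_false]
        exact S.f0_image ha0 hab
      refine ⟨f₀ π00 π01 π10 π11 ε a, f₀ π00 π01 π10 π11 ε b, ?_, ?_, ?_, himg, ?_, ?_⟩
      · exact (S.p1_lt_f0p1.trans_le (S.f0_mono_le S.hp₁.le ha)).le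
      · exact S.f0_mono_le ha0.le hab
      · have := S.f0_mono_le (ha0.le.trans hab) hb
        rwa [S.hfix₀] at this
      · rw [(step_f0 S Q hQpos hQinv ha hab hb).1, hA, hB]
        simp only [Bool.false_eq_true, if_false]
        rw [ENNReal.ofReal_mul S.hε1.le,
          ENNReal.ofReal_add (mul_nonneg S.h00.le hp) (mul_nonneg S.h10.le hq),
          ENNReal.ofReal_mul S.h00.le, ENNReal.ofReal_mul S.h10.le]
      · rw [(step_f0 S Q hQpos hQinv ha hab hb).2, hA, hB]
        simp only [Bool.false_eq_true, if_false]
        rw [ENNReal.ofReal_mul S.hε0.le,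
          ENNReal.ofReal_add (mul_nonneg S.h01.le hp) (mul_nonneg S.h11.le hq),
          ENNReal.ofReal_mul S.h01.le, ENNReal.ofReal_mul S.h11.le]
    · -- true : f₁
      have himg : fb π00 π01 π10 π11 ε true '' Set.Icc a b
          = Set.Icc (f₁ π00 π01 π10 π11 ε a) (f₁ π00 π01 π10 π11 ε b) := by
        rw [fb_true]
        exact S.f1_image ha0 hab
      refine ⟨f₁ π00 π01 π10 π11 ε a, f₁ π00 π01 π10 π11 ε b, ?_, ?_, ?_, himg, ?_, ?_⟩
      · have h1 : p₁ = f₁ π00 π01 π10 π11 ε p₁ := S.hfix₁.symm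
        calc p₁ = f₁ π00 π01 π10 π11 ε p₁ := h1
        _ ≤ f₁ π00 π01 π10 π11 ε a := S.f1_mono_le S.hp₁.le ha
      · exact S.f1_mono_le ha0.le hab
      · calc f₁ π00 π01 π10 π11 ε b ≤ f₁ π00 π01 π10 π11 ε p₀ :=
            S.f1_mono_le (ha0.le.trans hab) hb
        _ ≤ p₀ := S.f1p0_lt_p0.le
      · rw [(step_f1 S Q hQpos hQinv ha hab hb).1, hA, hB]
        simp only [if_true]
        rw [ENNReal.ofReal_mul S.hε0.le,
          ENNReal.ofReal_add (mul_nonneg S.h00.le hp) (mul_nonneg S.h10.le hq),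
          ENNReal.ofReal_mul S.h00.le, ENNReal.ofReal_mul S.h10.le]
      · rw [(step_f1 S Q hQpos hQinv ha hab hb).2, hA, hB]
        simp only [if_true]
        rw [ENNReal.ofReal_mul S.hε1.le,
          ENNReal.ofReal_add (mul_nonneg S.h01.le hp) (mul_nonneg S.h11.le hq),
          ENNReal.ofReal_mul S.h01.le, ENNReal.ofReal_mul S.h11.le]

end MainInv
end BWProof

/-- Theorem 3.5: in the non-overlapping case `f_1(p_0) < f_0(p_1)`, the Blackwell measure
of the interval `I_{i_1⋯i_n}` equals the probability of the word `(i_1,…,i_n)`. -/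
theorem blackwell_measure_of_word_interval (π00 π01 π10 π11 ε : ℝ)
    (h00 : 0 < π00) (h01 : 0 < π01) (h10 : 0 < π10) (h11 : 0 < π11)
    (hrow0 : π00 + π01 = 1) (hrow1 : π10 + π11 = 1)
    (hdet : 0 < π00 * π11 - π01 * π10)
    (hε0 : 0 < ε) (hε : ε < 1 / 2)
    (p₀ p₁ : ℝ) (hp₀ : 0 < p₀) (hp₁ : 0 < p₁)
    (hfix₀ : f₀ π00 π01 π10 π11 ε p₀ = p₀) (hfix₁ : f₁ π00 π01 π10 π11 ε p₁ = p₁)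
    (huniq₀ : ∀ q : ℝ, 0 < q → f₀ π00 π01 π10 π11 ε q = q → q = p₀)
    (huniq₁ : ∀ q : ℝ, 0 < q → f₁ π00 π01 π10 π11 ε q = q → q = p₁)
    (Q : MeasureTheory.Measure ℝ) [MeasureTheory.IsProbabilityMeasure Q]
    (hQpos : Q (Set.Ioi 0) = 1)
    (hQinv : BlackwellInvariant π00 π01 π10 π11 ε Q)
    (hnonoverlap : f₁ π00 π01 π10 π11 ε p₀ < f₀ π00 π01 π10 π11 ε p₁) :
    ∀ n : ℕ, 1 ≤ n → ∀ w : List Bool, w.length = n →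
      Q (wordInterval π00 π01 π10 π11 ε p₀ p₁ w) =
        ENNReal.ofReal (wordP π00 π01 π10 π11 ε w) := by
  intro n hn w hw
  have S : BWProof.Hyp π00 π01 π10 π11 ε p₀ p₁ :=
    ⟨h00, h01, h10, h11, hrow0, hrow1, hdet, hε0, hε, hp₀, hp₁, hfix₀, hfix₁,
      huniq₀, huniq₁, hnonoverlap⟩
  obtain ⟨a, b, ha, hab, hb, hInt, hA, hB⟩ := BWProof.main_inv S Q hQpos hQinv w
  obtain ⟨hp, hq⟩ := BWProof.wordPQ_nonneg S w
  rw [hInt]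
  unfold wordP
  have hone : ∀ x ∈ Set.Icc a b, BWProof.EU1 x + BWProof.EU2 x = 1 := by
    intro x hx
    exact BWProof.EU_sum (lt_of_lt_of_le (lt_of_lt_of_le S.hp₁ ha) hx.1)
  calc Q (Set.Icc a b) = ∫⁻ _ in Set.Icc a b, 1 ∂Q := (MeasureTheory.setLIntegral_one _).symm
  _ = ∫⁻ x in Set.Icc a b, (BWProof.EU1 x + BWProof.EU2 x) ∂Q :=
    (MeasureTheory.setLIntegral_congr_fun measurableSet_Icc
      hone).symm
  _ = (∫⁻ x in Set.Icc a b, BWProof.EU1 x ∂Q) + ∫⁻ x in Set.Icc a b, BWProof.EU2 x ∂Q :=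
    MeasureTheory.lintegral_add_left BWProof.EU1_meas _
  _ = ENNReal.ofReal (wordPQ π00 π01 π10 π11 ε w).1
      + ENNReal.ofReal (wordPQ π00 π01 π10 π11 ε w).2 := by rw [hA, hB]
  _ = ENNReal.ofReal ((wordPQ π00 π01 π10 π11 ε w).1 + (wordPQ π00 π01 π10 π11 ε w).2) :=
    (ENNReal.ofReal_add hp hq).symm
end

section
/- Boundedness of instantaneous location change (Appendix A): fix η ∈ (0,1/2) and assume there is ρ ∈ (0,1) such that |∂f_z/∂x(ε,x)| ≤ ρ for all z ∈ {0,1}, ε ∈ [η,1/2], x ≥ 0. Then for every k ≥ 1 there is a constant C_1(k,η) > 0, depending only on k, η and Π, such that for every binary sequence (z_i)_{i≥1}, every n ≥ 0, and every ε ∈ [η,1/2], the k-th derivative in ε of the iterate x_n(ε) satisfies |d^k x_n/dε^k (ε)| ≤ C_1(k,η). -/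
/-- `f_0(ε,x) = ((1−ε)/ε)·(π_00 x + π_10)/(π_01 x + π_11)`. -/
noncomputable def f₀ε (π00 π01 π10 π11 : ℝ) (ε x : ℝ) : ℝ :=
  ((1 - ε) / ε) * ((π00 * x + π10) / (π01 * x + π11))

/-- `f_1(ε,x) = (ε/(1−ε))·(π_00 x + π_10)/(π_01 x + π_11)`. -/
noncomputable def f₁ε (π00 π01 π10 π11 : ℝ) (ε x : ℝ) : ℝ :=
  (ε / (1 - ε)) * ((π00 * x + π10) / (π01 * x + π11))

/-- `f_b(ε,x)` for a binary symbol `b`. -/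
noncomputable def fbε (π00 π01 π10 π11 : ℝ) (b : Bool) (ε x : ℝ) : ℝ :=
  if b then f₁ε π00 π01 π10 π11 ε x else f₀ε π00 π01 π10 π11 ε x

/-- The iterates `x_0(ε) = π_10/π_01`, `x_n(ε) = f_{z_n}(ε, x_{n−1}(ε))`, as functions
of `ε`, driven by the binary sequence `z`. -/
noncomputable def xIter (π00 π01 π10 π11 : ℝ) (z : ℕ → Bool) : ℕ → ℝ → ℝ
  | 0 => fun _ => π10 / π01
  | n + 1 => fun ε => fbε π00 π01 π10 π11 (z (n + 1)) ε (xIter π00 π01 π10 π11 z n ε)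

open Set Filter Topology

/-! ### Generic helpers about iterated derivatives on open sets -/

lemma hasDerivAt_iteratedDeriv_open {f : ℝ → ℝ} {U : Set ℝ} (hU : IsOpen U)
    (hf : ContDiffOn ℝ (⊤ : ℕ∞) f U) (n : ℕ) {t : ℝ} (ht : t ∈ U) :
    HasDerivAt (iteratedDeriv n f) (iteratedDeriv (n + 1) f t) t := by
  have hu : UniqueDiffOn ℝ U := hU.uniqueDiffOn
  have heq : ∀ m : ℕ, Set.EqOn (iteratedDerivWithin m f U) (iteratedDeriv m f) U := by
    intro m x hx
    rw [iteratedDerivWithin_eq_iteratedFDerivWithin, iteratedDeriv_eq_iteratedFDeriv,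
      iteratedFDerivWithin_of_isOpen m hU hx]
  have h1 : DifferentiableOn ℝ (iteratedDerivWithin n f U) U :=
    hf.differentiableOn_iteratedDerivWithin (by exact_mod_cast WithTop.coe_lt_top _) hu
  have h2 : DifferentiableAt ℝ (iteratedDerivWithin n f U) t :=
    (h1 t ht).differentiableAt (hU.mem_nhds ht)
  have h3 : HasDerivAt (iteratedDerivWithin n f U)
      (derivWithin (iteratedDerivWithin n f U) U t) t := by
    rw [derivWithin_of_isOpen hU ht]; exact h2.hasDerivAt
  have h4 : HasDerivAt (iteratedDeriv n f)
      (derivWithin (iteratedDerivWithin n f U) U t) t :=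
    h3.congr_of_eventuallyEq
      (eventuallyEq_of_mem (hU.mem_nhds ht) fun s hs => ((heq n) hs).symm)
  rwa [← iteratedDerivWithin_succ, heq (n + 1) ht] at h4

lemma abs_iteratedDeriv_bound_open {f : ℝ → ℝ} {U s : Set ℝ} (hU : IsOpen U)
    (hf : ContDiffOn ℝ (⊤ : ℕ∞) f U) (hs : IsCompact s) (hsub : s ⊆ U) (n : ℕ) :
    ∃ C, 0 ≤ C ∧ ∀ x ∈ s, |iteratedDeriv n f x| ≤ C := by
  have hcont : ContinuousOn (iteratedDeriv n f) s := fun x hx =>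
    ((hasDerivAt_iteratedDeriv_open hU hf n (hsub hx)).differentiableAt.continuousAt).continuousWithinAt
  obtain ⟨C, hC⟩ := hs.exists_bound_of_continuousOn hcont
  exact ⟨max C 0, le_max_right _ _, fun x hx => by
    calc |iteratedDeriv n f x| = ‖iteratedDeriv n f x‖ := (Real.norm_eq_abs _).symm
    _ ≤ C := hC x hx
    _ ≤ max C 0 := le_max_left _ _⟩

/-! ### Terms of the structured Faà di Bruno remainder -/

/-- all ways to increment one entry of a list -/
def bumps : List ℕ → List (List ℕ)
  | [] => []
  | j :: l => ((j + 1) :: l) :: (bumps l).map (fun l' => j :: l')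

/-- A symbolic term `(a, b, l)` representing `cc⁽ᵃ⁾(t) · rr⁽ᵇ⁾(g t) · ∏_{j∈l} g⁽ʲ⁾(t)`. -/
abbrev Tm : Type := ℕ × ℕ × List ℕ

noncomputable def tmEv (cc rr g : ℝ → ℝ) (e : Tm) (t : ℝ) : ℝ :=
  iteratedDeriv e.1 cc t * (iteratedDeriv e.2.1 rr (g t) *
    (e.2.2.map (fun j => iteratedDeriv j g t)).prod)

/-- symbolic derivative of a term -/
def dT (e : Tm) : List Tm :=
  (e.1 + 1, e.2.1, e.2.2) :: (e.1, e.2.1 + 1, 1 :: e.2.2) ::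
    (bumps e.2.2).map (fun l' => (e.1, e.2.1, l'))

lemma bumps_lt {m : ℕ} : ∀ {l : List ℕ}, (∀ j ∈ l, j < m) →
    ∀ l' ∈ bumps l, ∀ j' ∈ l', j' < m + 1
  | [], _, l', hl' => by simp [bumps] at hl'
  | j :: l, h, l', hl' => by
    have hj : j < m := h j (by simp)
    have hl : ∀ i ∈ l, i < m := fun i hi => h i (by simp [hi])
    rcases (by simpa [bumps] using hl' :
        l' = (j + 1) :: l ∨ ∃ l'' ∈ bumps l, j :: l'' = l') with h1 | ⟨l'', hl'', h2⟩
    · subst h1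
      intro j' hj'
      rcases List.mem_cons.1 hj' with h | h
      · omega
      · exact lt_trans (hl _ h) (Nat.lt_succ_self m)
    · subst h2
      intro j' hj'
      rcases List.mem_cons.1 hj' with h | h
      · omega
      · exact bumps_lt hl l'' hl'' j' h

lemma dT_lt {m : ℕ} (hm : 0 < m) {e : Tm} (he : ∀ j ∈ e.2.2, j < m) :
    ∀ e' ∈ dT e, ∀ j ∈ e'.2.2, j < m + 1 := by
  obtain ⟨a, b, l⟩ := e
  intro e' he' j hj
  rcases (by simpa [dT] using he' :
      e' = (a + 1, b, l) ∨ e' = (a, b + 1, 1 :: l) ∨ ∃ l' ∈ bumps l, (a, b, l') = e')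
    with h | h | ⟨l', hl', h⟩
  · subst h; exact lt_trans (he j hj) (Nat.lt_succ_self m)
  · subst h
    rcases List.mem_cons.1 hj with h | h
    · omega
    · exact lt_trans (he j h) (Nat.lt_succ_self m)
  · subst h; exact bumps_lt he l' hl' j hj

/-! ### Analytic facts about the terms -/

lemma hasDerivAt_prodList {g : ℝ → ℝ} {U : Set ℝ} (hU : IsOpen U)
    (hg : ContDiffOn ℝ (⊤ : ℕ∞) g U) {t : ℝ} (ht : t ∈ U) (l : List ℕ) :
    HasDerivAt (fun s => (l.map (fun j => iteratedDeriv j g s)).prod)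
      (((bumps l).map (fun l' => (l'.map (fun j => iteratedDeriv j g t)).prod)).sum) t := by
  induction l with
  | nil => simpa [bumps] using hasDerivAt_const t (1 : ℝ)
  | cons j l ih =>
    have H := (hasDerivAt_iteratedDeriv_open hU hg j ht).mul ih
    have hfun : (fun s => ((j :: l).map (fun i => iteratedDeriv i g s)).prod)
        = fun s => iteratedDeriv j g s *
          ((l.map (fun i => iteratedDeriv i g s)).prod) := by
      funext s; simp
    rw [hfun]
    refine H.congr_deriv (Eq.symm ?_)
    simp only [bumps, List.map_cons, List.sum_cons, List.map_map, Function.comp_def,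
      List.prod_cons]
    rw [List.sum_map_mul_left]

lemma hasDerivAt_tmEv {cc rr g : ℝ → ℝ} {U W : Set ℝ} (hU : IsOpen U) (hW : IsOpen W)
    (hcc : ContDiffOn ℝ (⊤ : ℕ∞) cc U) (hrr : ContDiffOn ℝ (⊤ : ℕ∞) rr W) (hg : ContDiffOn ℝ (⊤ : ℕ∞) g U)
    (hmap : Set.MapsTo g U W) {t : ℝ} (ht : t ∈ U) (e : Tm) :
    HasDerivAt (fun s => tmEv cc rr g e s)
      (((dT e).map (fun e' => tmEv cc rr g e' t)).sum) t := by
  obtain ⟨a, b, l⟩ := e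
  have hc := hasDerivAt_iteratedDeriv_open hU hcc a ht
  have hgd : HasDerivAt g (iteratedDeriv 1 g t) t := by
    have := hasDerivAt_iteratedDeriv_open hU hg 0 ht
    rwa [iteratedDeriv_zero] at this
  have hr : HasDerivAt (fun s => iteratedDeriv b rr (g s))
      (iteratedDeriv (b + 1) rr (g t) * iteratedDeriv 1 g t) t :=
    (hasDerivAt_iteratedDeriv_open hW hrr b (hmap ht)).comp t hgd
  have hp := hasDerivAt_prodList hU hg ht l
  have H := hc.mul (hr.mul hp)
  refine H.congr_deriv (Eq.symm ?_)
  simp only [dT, tmEv, List.map_cons, List.sum_cons, List.map_map, Function.comp_def,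
    List.prod_cons, Pi.mul_apply]
  rw [List.sum_map_mul_left]
  rw [List.sum_map_mul_left]
  try ring
lemma hasDerivAt_tmList {cc rr g : ℝ → ℝ} {U W : Set ℝ} (hU : IsOpen U) (hW : IsOpen W)
    (hcc : ContDiffOn ℝ (⊤ : ℕ∞) cc U) (hrr : ContDiffOn ℝ (⊤ : ℕ∞) rr W) (hg : ContDiffOn ℝ (⊤ : ℕ∞) g U)
    (hmap : Set.MapsTo g U W) {t : ℝ} (ht : t ∈ U) (L : List Tm) :
    HasDerivAt (fun s => (L.map (fun e => tmEv cc rr g e s)).sum)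
      (((L.flatMap dT).map (fun e' => tmEv cc rr g e' t)).sum) t := by
  induction L with
  | nil => simpa using hasDerivAt_const t (0 : ℝ)
  | cons e L ih =>
    have H := (hasDerivAt_tmEv hU hW hcc hrr hg hmap ht e).add ih
    have hfun : (fun s => (((e :: L).map (fun e => tmEv cc rr g e s))).sum)
        = fun s => tmEv cc rr g e s + ((L.map (fun e => tmEv cc rr g e s))).sum := by
      funext s; simp
    rw [hfun]
    refine H.congr_deriv (Eq.symm ?_)
    simp [List.flatMap_cons]

/-! ### The structured Faà di Bruno formula for `h = cc · (rr ∘ g)` -/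

lemma key_formula {rr : ℝ → ℝ} {U W : Set ℝ} (hU : IsOpen U) (hW : IsOpen W)
    (hrr : ContDiffOn ℝ (⊤ : ℕ∞) rr W) :
    ∀ k : ℕ, 1 ≤ k → ∃ L : List Tm,
      (∀ e ∈ L, ∀ j ∈ e.2.2, j < k) ∧
      ∀ cc g h : ℝ → ℝ, ContDiffOn ℝ (⊤ : ℕ∞) cc U → ContDiffOn ℝ (⊤ : ℕ∞) g U → Set.MapsTo g U W →
        (∀ t ∈ U, h t = cc t * rr (g t)) → ∀ t ∈ U,
        iteratedDeriv k h t =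
          (((0, 1, [k]) :: L : List Tm).map (fun e => tmEv cc rr g e t)).sum := by
  intro k hk
  induction k, hk using Nat.le_induction with
  | base =>
    refine ⟨[(1, 0, [])], by simp, ?_⟩
    intro cc g h hcc hg hmap hh t ht
    have H := hasDerivAt_tmEv hU hW hcc hrr hg hmap ht (0, 0, ([] : List ℕ))
    have H2 : HasDerivAt h
        (((dT (0, 0, ([] : List ℕ))).map (fun e' => tmEv cc rr g e' t)).sum) t :=
      H.congr_of_eventuallyEq (eventuallyEq_of_mem (hU.mem_nhds ht)
        (fun s hs => by simp [tmEv, hh s hs]))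
    rw [iteratedDeriv_one, H2.deriv]
    simp [dT, tmEv, bumps]
    ring
  | succ k hk ih =>
    obtain ⟨L, hLinv, hL⟩ := ih
    refine ⟨(1, 1, [k]) :: (0, 2, [1, k]) :: L.flatMap dT, ?_, ?_⟩
    · intro e he j hj
      rcases (by simpa using he :
          e = ((1 : ℕ), (1 : ℕ), [k]) ∨ e = ((0 : ℕ), (2 : ℕ), [1, k]) ∨ e ∈ L.flatMap dT)
        with h | h | h
      · subst h; simp at hj; omega
      · subst h; simp at hj; omega
      · obtain ⟨e₀, he₀, he'⟩ := List.mem_flatMap.1 h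
        exact dT_lt hk (hLinv e₀ he₀) e he' j hj
    · intro cc g h hcc hg hmap hh t ht
      have H := hasDerivAt_tmList hU hW hcc hrr hg hmap ht (((0, 1, [k]) : Tm) :: L)
      have H2 : HasDerivAt (iteratedDeriv k h)
          ((((((0, 1, [k]) : Tm) :: L).flatMap dT).map (fun e' => tmEv cc rr g e' t)).sum) t :=
        H.congr_of_eventuallyEq (eventuallyEq_of_mem (hU.mem_nhds ht)
          (fun s hs => hL cc g h hcc hg hmap hh s hs))
      rw [iteratedDeriv_succ, H2.deriv]
      simp only [List.flatMap_cons, List.map_append, List.sum_append, dT, bumps,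
        List.map_cons, List.sum_cons, List.map_nil, List.sum_nil]
      ring

/-! ### Bound helpers -/

lemma abs_prodList_le {f B : ℕ → ℝ} : ∀ {l : List ℕ}, (∀ j ∈ l, |f j| ≤ B j) →
    |(l.map f).prod| ≤ (l.map B).prod
  | [], _ => by simp
  | j :: l, h => by
    have h1 : |f j| ≤ B j := h j (by simp)
    have h2 := abs_prodList_le (f := f) (B := B) (l := l) (fun i hi => h i (by simp [hi]))
    simp only [List.map_cons, List.prod_cons, abs_mul]
    exact mul_le_mul h1 h2 (abs_nonneg _) (le_trans (abs_nonneg _) h1)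

lemma prodList_nonneg {B : ℕ → ℝ} (hB : ∀ j, 0 ≤ B j) (l : List ℕ) :
    0 ≤ (l.map B).prod := by
  induction l with
  | nil => simp
  | cons j l ih =>
    simp only [List.map_cons, List.prod_cons]
    exact mul_nonneg (hB j) ih

lemma abs_sumList_le {α : Type*} {f B : α → ℝ} : ∀ {L : List α}, (∀ e ∈ L, |f e| ≤ B e) →
    |(L.map f).sum| ≤ (L.map B).sum
  | [], _ => by simp
  | e :: L, h => by
    have h1 : |f e| ≤ B e := h e (by simp)
    have h2 := abs_sumList_le (f := f) (B := B) (L := L) (fun i hi => h i (by simp [hi]))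
    simp only [List.map_cons, List.sum_cons]
    exact le_trans (abs_add_le _ _) (add_le_add h1 h2)

lemma iteratedDeriv_const_succ : ∀ (n : ℕ) (a : ℝ),
    iteratedDeriv (n + 1) (fun _ : ℝ => a) = fun _ => 0
  | 0, a => by rw [iteratedDeriv_one]; exact deriv_const' a
  | n + 1, a => by
    rw [iteratedDeriv_succ', deriv_const']
    exact iteratedDeriv_const_succ n 0


/-- Appendix A: boundedness of the instantaneous location change.  If the maps
`x ↦ f_z(ε,x)` are uniform `ρ`-contractions (`ρ < 1`) for `ε ∈ [η, 1/2]`, then for each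
`k ≥ 1` the `k`-th `ε`-derivatives of all the iterates `x_n(ε)` are uniformly bounded on
`[η, 1/2]` by a constant depending only on `k`, `η` (and `Π`). -/
theorem location_change_bounded (π00 π01 π10 π11 : ℝ)
    (h00 : 0 < π00) (h01 : 0 < π01) (h10 : 0 < π10) (h11 : 0 < π11)
    (hrow0 : π00 + π01 = 1) (hrow1 : π10 + π11 = 1)
    (hdet : 0 < π00 * π11 - π01 * π10)
    (η : ℝ) (hη0 : 0 < η) (hη : η < 1 / 2)
    (ρ : ℝ) (hρ0 : 0 < ρ) (hρ1 : ρ < 1)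
    (hcontr : ∀ b : Bool, ∀ ε ∈ Set.Icc η (1 / 2 : ℝ), ∀ x : ℝ, 0 ≤ x →
      |deriv (fun y => fbε π00 π01 π10 π11 b ε y) x| ≤ ρ) :
    ∀ k : ℕ, 1 ≤ k → ∃ C : ℝ, 0 < C ∧
      ∀ z : ℕ → Bool, ∀ n : ℕ, ∀ ε ∈ Set.Icc η (1 / 2 : ℝ),
        |iteratedDeriv k (xIter π00 π01 π10 π11 z n) ε| ≤ C := by
  set I : Set ℝ := Set.Icc η (1 / 2 : ℝ) with hIdef
  set V : Set ℝ := Set.Ioo 0 1 with hVdef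
  set W : Set ℝ := {x : ℝ | 0 < π01 * x + π11} with hWdef
  set c : Bool → ℝ → ℝ := fun b ε => if b then ε / (1 - ε) else (1 - ε) / ε with hcdef
  set rr : ℝ → ℝ := fun x => (π00 * x + π10) / (π01 * x + π11) with hrdef
  set X : (ℕ → Bool) → ℕ → ℝ → ℝ := xIter π00 π01 π10 π11 with hXdef
  have hVopen : IsOpen V := isOpen_Ioo
  have hWopen : IsOpen W :=
    isOpen_lt continuous_const ((continuous_const.mul continuous_id).add continuous_const)
  have hIV : I ⊆ V := fun x hx => ⟨lt_of_lt_of_le hη0 hx.1, lt_of_le_of_lt hx.2 (by norm_num)⟩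
  have hfb : ∀ (b : Bool) (ε x : ℝ), fbε π00 π01 π10 π11 b ε x = c b ε * rr x := by
    intro b ε x; cases b <;> simp [fbε, f₀ε, f₁ε, hcdef, hrdef]
  have hXs : ∀ (z : ℕ → Bool) (n : ℕ) (ε : ℝ), X z (n + 1) ε = c (z (n + 1)) ε * rr (X z n ε) := by
    intro z n ε
    have h1 : X z (n + 1) ε = fbε π00 π01 π10 π11 (z (n + 1)) ε (X z n ε) := rfl
    rw [h1, hfb]
  have hcsm : ∀ b : Bool, ContDiffOn ℝ (⊤ : ℕ∞) (c b) V := by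
    intro b
    cases b
    · exact ((contDiff_const.sub contDiff_id).contDiffOn).div (contDiff_id.contDiffOn)
        (fun x hx => ne_of_gt hx.1)
    · exact (contDiff_id.contDiffOn).div ((contDiff_const.sub contDiff_id).contDiffOn)
        (fun x hx => sub_ne_zero.mpr (ne_of_lt hx.2).symm)
  have hrsm : ContDiffOn ℝ (⊤ : ℕ∞) rr W := by
    refine ContDiffOn.div ?_ ?_ (fun x hx => ne_of_gt hx)
    · exact ((contDiff_const.mul contDiff_id).add contDiff_const).contDiffOn
    · exact ((contDiff_const.mul contDiff_id).add contDiff_const).contDiffOn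
  have hcpos : ∀ b : Bool, ∀ t ∈ V, 0 < c b t := by
    intro b t ht
    rcases ht with ⟨h1, h2⟩
    cases b <;> simp [hcdef] <;> [exact div_pos (by linarith) h1; exact div_pos h1 (by linarith)]
  have hrpos : ∀ x : ℝ, 0 ≤ x → 0 < rr x := by
    intro x hx
    exact div_pos (by nlinarith) (by nlinarith)
  have hXpos : ∀ (z : ℕ → Bool) (n : ℕ), ∀ t ∈ V, 0 < X z n t := by
    intro z n
    induction n with
    | zero => intro t _; exact div_pos h10 h01
    | succ n ih =>
      intro t ht
      rw [hXs]
      exact mul_pos (hcpos _ t ht) (hrpos _ (le_of_lt (ih t ht)))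
  have hXW : ∀ (z : ℕ → Bool) (n : ℕ), Set.MapsTo (X z n) V W := by
    intro z n t ht
    have := hXpos z n t ht
    show 0 < π01 * X z n t + π11
    nlinarith
  have hXsm : ∀ (z : ℕ → Bool) (n : ℕ), ContDiffOn ℝ (⊤ : ℕ∞) (X z n) V := by
    intro z n
    induction n with
    | zero => exact contDiffOn_const
    | succ n ih =>
      have hfun : X z (n + 1) = fun t => c (z (n + 1)) t * rr (X z n t) := funext (hXs z n)
      rw [hfun]
      exact (hcsm _).mul (hrsm.comp ih (hXW z n))
  -- uniform range bound on I
  set M : ℝ := max (π10 / π01) ((1 - η) / η * (π00 / π01)) with hMdef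
  have hM0 : 0 ≤ M := le_trans (le_of_lt (div_pos h10 h01)) (le_max_left _ _)
  have hcub : ∀ b : Bool, ∀ ε ∈ I, c b ε ≤ (1 - η) / η := by
    intro b ε hε
    rcases hε with ⟨h1, h2⟩
    have hε0 : 0 < ε := lt_of_lt_of_le hη0 h1
    have h1ε : 0 < 1 - ε := by linarith
    cases b <;> simp [hcdef]
    · rw [div_le_div_iff₀ hε0 hη0]; nlinarith
    · rw [div_le_div_iff₀ h1ε hη0]; nlinarith
  have hrub : ∀ x : ℝ, 0 ≤ x → rr x ≤ π00 / π01 := by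
    intro x hx
    rw [hrdef]
    rw [div_le_div_iff₀ (by nlinarith) h01]
    nlinarith
  have hXM : ∀ (z : ℕ → Bool) (n : ℕ), ∀ ε ∈ I, X z n ε ∈ Set.Icc (0 : ℝ) M := by
    intro z n ε hε
    refine ⟨le_of_lt (hXpos z n ε (hIV hε)), ?_⟩
    cases n with
    | zero => exact le_max_left _ _
    | succ n =>
      rw [hXs]
      refine le_trans ?_ (le_max_right _ _)
      have hx0 : 0 ≤ X z n ε := le_of_lt (hXpos z n ε (hIV hε))
      have hc1 : 0 < c (z (n + 1)) ε := hcpos _ ε (hIV hε)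
      have hr1 : 0 < rr (X z n ε) := hrpos _ hx0
      have := hcub (z (n + 1)) ε hε
      have := hrub (X z n ε) hx0
      have hη' : 0 < (1 - η) / η := div_pos (by linarith) hη0
      nlinarith
  have hKW : Set.Icc (0 : ℝ) M ⊆ W := fun x hx => by
    show 0 < π01 * x + π11; nlinarith [hx.1]
  -- contraction in the form we need
  have hcontr' : ∀ b : Bool, ∀ ε ∈ I, ∀ x : ℝ, 0 ≤ x → |c b ε * deriv rr x| ≤ ρ := by
    intro b ε hε x hx
    have hxW : x ∈ W := by show 0 < π01 * x + π11; nlinarith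
    have hdiff : DifferentiableAt ℝ rr x :=
      ((hrsm.differentiableOn (by simp)) x hxW).differentiableAt (hWopen.mem_nhds hxW)
    have h1 : (fun y => fbε π00 π01 π10 π11 b ε y) = fun y => c b ε * rr y :=
      funext (fun y => hfb b ε y)
    have h2 := hcontr b ε hε x hx
    rw [h1, deriv_const_mul _ hdiff] at h2
    exact h2
  -- uniform bounds on derivatives of the building blocks
  have hCa : ∀ a : ℕ, ∃ C, 0 ≤ C ∧ ∀ b : Bool, ∀ ε ∈ I, |iteratedDeriv a (c b) ε| ≤ C := by
    intro a
    obtain ⟨C0, hC00, hC0b⟩ :=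
      abs_iteratedDeriv_bound_open hVopen (hcsm false) isCompact_Icc hIV a
    obtain ⟨C1, hC10, hC1b⟩ :=
      abs_iteratedDeriv_bound_open hVopen (hcsm true) isCompact_Icc hIV a
    refine ⟨max C0 C1, le_trans hC00 (le_max_left _ _), fun b ε hε => ?_⟩
    cases b
    · exact le_trans (hC0b ε hε) (le_max_left _ _)
    · exact le_trans (hC1b ε hε) (le_max_right _ _)
  choose Ca hCa0 hCab using hCa
  have hRb : ∀ m : ℕ, ∃ C, 0 ≤ C ∧ ∀ x ∈ Set.Icc (0 : ℝ) M, |iteratedDeriv m rr x| ≤ C :=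
    fun m => abs_iteratedDeriv_bound_open hWopen hrsm isCompact_Icc hKW m
  choose Rb hRb0 hRbb using hRb
  have h1ρ : 0 < 1 - ρ := by linarith
  -- the main bound, by strong induction on k
  have main : ∀ k : ℕ, ∃ C, 0 ≤ C ∧
      ∀ (z : ℕ → Bool) (n : ℕ), ∀ ε ∈ I, |iteratedDeriv k (X z n) ε| ≤ C := by
    intro k
    induction k using Nat.strong_induction_on with
    | _ k IH =>
      match k, IH with
      | 0, _ =>
        refine ⟨M, hM0, fun z n ε hε => ?_⟩
        rw [iteratedDeriv_zero]
        rcases hXM z n ε hε with ⟨hx0, hxM⟩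
        rw [abs_of_nonneg hx0]; exact hxM
      | k + 1, IH =>
        have hBc : ∀ j : ℕ, ∃ B, 0 ≤ B ∧ (j < k + 1 →
            ∀ (z : ℕ → Bool) (n : ℕ), ∀ ε ∈ I, |iteratedDeriv j (X z n) ε| ≤ B) := by
          intro j
          by_cases hj : j < k + 1
          · obtain ⟨B, hB0, hBb⟩ := IH j hj
            exact ⟨B, hB0, fun _ => hBb⟩
          · exact ⟨0, le_refl _, fun h => absurd h hj⟩
        choose B hB0 hBb using hBc
        obtain ⟨L, hLinv, hL⟩ := key_formula hVopen hWopen hrsm (k + 1) (Nat.succ_le_succ (Nat.zero_le _))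
        set A : ℝ := (L.map (fun e : Tm => Ca e.1 * (Rb e.2.1 * (e.2.2.map B).prod))).sum with hAdef
        have hA0 : 0 ≤ A := by
          apply List.sum_nonneg
          intro x hx
          obtain ⟨e, _, rfl⟩ := List.mem_map.1 hx
          exact mul_nonneg (hCa0 _) (mul_nonneg (hRb0 _) (prodList_nonneg hB0 _))
        refine ⟨A / (1 - ρ), div_nonneg hA0 (le_of_lt h1ρ), ?_⟩
        intro z n
        induction n with
        | zero =>
          intro ε hε
          have hconst : X z 0 = fun _ : ℝ => π10 / π01 := rfl
          rw [hconst, iteratedDeriv_const_succ]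
          simpa using div_nonneg hA0 (le_of_lt h1ρ)
        | succ n ihn =>
          intro ε hε
          have hVε := hIV hε
          have hid := hL (c (z (n + 1))) (X z n) (X z (n + 1)) (hcsm _) (hXsm z n)
            (hXW z n) (fun t _ => hXs z n t) ε hVε
          rw [hid]
          simp only [List.map_cons, List.sum_cons]
          have hx0 : 0 ≤ X z n ε := le_of_lt (hXpos z n ε hVε)
          have htop : |tmEv (c (z (n + 1))) rr (X z n) (0, 1, [k + 1]) ε| ≤ ρ * (A / (1 - ρ)) := by
            have h1 : |c (z (n + 1)) ε * deriv rr (X z n ε)| ≤ ρ := hcontr' _ ε hε _ hx0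
            have h2 : |iteratedDeriv (k + 1) (X z n) ε| ≤ A / (1 - ρ) := ihn ε hε
            have h3 : tmEv (c (z (n + 1))) rr (X z n) (0, 1, [k + 1]) ε
                = (c (z (n + 1)) ε * deriv rr (X z n ε)) * iteratedDeriv (k + 1) (X z n) ε := by
              simp [tmEv, iteratedDeriv_zero, iteratedDeriv_one]
              ring
            rw [h3, abs_mul]
            exact mul_le_mul h1 h2 (abs_nonneg _) (le_of_lt hρ0)
          have hrest : |(L.map (fun e => tmEv (c (z (n + 1))) rr (X z n) e ε)).sum| ≤ A := by
            rw [hAdef]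
            apply abs_sumList_le
            intro e he
            have hbound : ∀ j ∈ e.2.2, |iteratedDeriv j (X z n) ε| ≤ B j := fun j hj =>
              hBb j (hLinv e he j hj) z n ε hε
            have hprod : |((e.2.2.map (fun j => iteratedDeriv j (X z n) ε))).prod|
                ≤ (e.2.2.map B).prod := abs_prodList_le hbound
            have hca : |iteratedDeriv e.1 (c (z (n + 1))) ε| ≤ Ca e.1 := hCab e.1 _ ε hε
            have hrb : |iteratedDeriv e.2.1 rr (X z n ε)| ≤ Rb e.2.1 :=
              hRbb e.2.1 _ (hXM z n ε hε)
            have h4 : |tmEv (c (z (n + 1))) rr (X z n) e ε|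
                = |iteratedDeriv e.1 (c (z (n + 1))) ε| *
                  (|iteratedDeriv e.2.1 rr (X z n ε)| *
                    |((e.2.2.map (fun j => iteratedDeriv j (X z n) ε))).prod|) := by
              rw [tmEv, abs_mul, abs_mul]
            rw [h4]
            refine mul_le_mul hca ?_ (mul_nonneg (abs_nonneg _) (abs_nonneg _)) (hCa0 _)
            exact mul_le_mul hrb hprod (abs_nonneg _) (hRb0 _)
          calc |tmEv (c (z (n + 1))) rr (X z n) (0, 1, [k + 1]) ε +
                (L.map (fun e => tmEv (c (z (n + 1))) rr (X z n) e ε)).sum|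
              ≤ ρ * (A / (1 - ρ)) + A := le_trans (abs_add_le _ _) (add_le_add htop hrest)
            _ = A / (1 - ρ) := by field_simp; ring
  intro k hk
  obtain ⟨C, hC0, hCb⟩ := main k
  exact ⟨C + 1, by linarith, fun z n ε hε => le_trans (hCb z n ε hε) (by linarith)⟩
end

section
/- First derivative of word probabilities at the low-SNR point (Appendix E): for every n ≥ 1 and every binary word (z_1,…,z_n), the derivative in δ of the word probability satisfies d/dδ [ p_Z^δ(z_1⋯z_n) ] |_{δ=0} = (1/2)^{n−1} ∑_{i=1}^n ( p_X(z_i) − p_X(1−z_i) ). -/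
/-- Stationary probability of symbol `0` (coded `false`): `p_X(0) = π_10/(π_01+π_10)`. -/
noncomputable def pX (π01 π10 : ℝ) (b : Bool) : ℝ :=
  if b then π01 / (π01 + π10) else π10 / (π01 + π10)

/-- `p_Z^δ(z_1⋯z_n)`: the probability that the first `n` outputs of the stationary Markov
chain with transition matrix `Π` observed through a binary symmetric channel with crossover
probability `ε = 1/2 − δ` equal `z_1,…,z_n`; computed by the forward recursion
`a_k = p_E(z_k)(π_00 a_{k−1} + π_10 b_{k−1})`, `b_k = p_E(1−z_k)(π_01 a_{k−1} + π_11 b_{k−1})`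
with `p_E(0) = 1/2 + δ`, `p_E(1) = 1/2 − δ`, and `p_Z^δ = a_n + b_n`. -/
noncomputable def pZ (π00 π01 π10 π11 : ℝ) (δ : ℝ) (w : List Bool) : ℝ :=
  (w.foldl
    (fun ab i =>
      ((if i then 1 / 2 - δ else 1 / 2 + δ) * (π00 * ab.1 + π10 * ab.2),
       (if i then 1 / 2 + δ else 1 / 2 - δ) * (π01 * ab.1 + π11 * ab.2)))
    (π10 / (π01 + π10), π01 / (π01 + π10))).1 +
  (w.foldl
    (fun ab i =>
      ((if i then 1 / 2 - δ else 1 / 2 + δ) * (π00 * ab.1 + π10 * ab.2),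
       (if i then 1 / 2 + δ else 1 / 2 - δ) * (π01 * ab.1 + π11 * ab.2)))
    (π10 / (π01 + π10), π01 / (π01 + π10))).2

/-- `R_n(δ) = ∑_{(z_1,…,z_n)} p_Z^δ(z_1⋯z_n) log p_Z^δ(z_1⋯z_n)`. -/
noncomputable def Rn (π00 π01 π10 π11 : ℝ) (n : ℕ) (δ : ℝ) : ℝ :=
  ∑ w : Fin n → Bool,
    pZ π00 π01 π10 π11 δ (List.ofFn w) * Real.log (pZ π00 π01 π10 π11 δ (List.ofFn w))

lemma key (π00 π01 π10 π11 p0 p1 : ℝ) (hrow0 : π00 + π01 = 1) (hrow1 : π10 + π11 = 1)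
    (hst0 : π00 * p0 + π10 * p1 = p0) (hst1 : π01 * p0 + π11 * p1 = p1) :
    ∀ (l : List Bool) (a b : ℝ → ℝ) (da db c : ℝ),
      HasDerivAt a da 0 → HasDerivAt b db 0 → a 0 = c * p0 → b 0 = c * p1 →
      ∃ Da Db : ℝ,
        HasDerivAt (fun δ => (l.foldl
          (fun ab i =>
            ((if i then 1 / 2 - δ else 1 / 2 + δ) * (π00 * ab.1 + π10 * ab.2),
             (if i then 1 / 2 + δ else 1 / 2 - δ) * (π01 * ab.1 + π11 * ab.2)))
          (a δ, b δ)).1) Da 0 ∧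
        HasDerivAt (fun δ => (l.foldl
          (fun ab i =>
            ((if i then 1 / 2 - δ else 1 / 2 + δ) * (π00 * ab.1 + π10 * ab.2),
             (if i then 1 / 2 + δ else 1 / 2 - δ) * (π01 * ab.1 + π11 * ab.2)))
          (a δ, b δ)).2) Db 0 ∧
        Da + Db = (1 / 2 : ℝ) ^ l.length * (da + db) +
          (1 / 2 : ℝ) ^ l.length * 2 * c * (p0 - p1) *
            (l.map (fun i => if i then (-1 : ℝ) else 1)).sum := by
  intro l
  induction l with
  | nil =>
    intro a b da db c ha hb ha0 hb0
    exact ⟨da, db, ha, hb, by simp⟩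
  | cons i t ih =>
    intro a b da db c ha hb ha0 hb0
    set s : ℝ := if i then (-1 : ℝ) else 1 with hs
    have hu : HasDerivAt (fun δ : ℝ => (if i then 1 / 2 - δ else 1 / 2 + δ)) s 0 := by
      cases i <;> simp only [hs, if_true, if_false, Bool.false_eq_true]
      · simpa using (hasDerivAt_id' (0:ℝ)).const_add (1/2 : ℝ)
      · simpa using (hasDerivAt_id' (0:ℝ)).const_sub (1/2 : ℝ)
    have hu' : HasDerivAt (fun δ : ℝ => (if i then 1 / 2 + δ else 1 / 2 - δ)) (-s) 0 := by
      cases i <;> simp only [hs, if_true, if_false, Bool.false_eq_true]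
      · simpa using (hasDerivAt_id' (0:ℝ)).const_sub (1/2 : ℝ)
      · simpa using (hasDerivAt_id' (0:ℝ)).const_add (1/2 : ℝ)
    have hu0 : (if i then (1:ℝ) / 2 - 0 else 1 / 2 + 0) = 1 / 2 := by cases i <;> norm_num
    have hu0' : (if i then (1:ℝ) / 2 + 0 else 1 / 2 - 0) = 1 / 2 := by cases i <;> norm_num
    have hv : HasDerivAt (fun δ => π00 * a δ + π10 * b δ) (π00 * da + π10 * db) 0 :=
      ((ha.const_mul π00).add (hb.const_mul π10))
    have hv' : HasDerivAt (fun δ => π01 * a δ + π11 * b δ) (π01 * da + π11 * db) 0 :=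
      ((ha.const_mul π01).add (hb.const_mul π11))
    have ha' : HasDerivAt (fun δ => (if i then 1 / 2 - δ else 1 / 2 + δ) * (π00 * a δ + π10 * b δ))
        (s * (π00 * a 0 + π10 * b 0) + (if i then (1:ℝ)/2 - 0 else 1/2 + 0) * (π00 * da + π10 * db)) 0 :=
      hu.mul hv
    have hb' : HasDerivAt (fun δ => (if i then 1 / 2 + δ else 1 / 2 - δ) * (π01 * a δ + π11 * b δ))
        (-s * (π01 * a 0 + π11 * b 0) + (if i then (1:ℝ)/2 + 0 else 1/2 - 0) * (π01 * da + π11 * db)) 0 :=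
      hu'.mul hv'
    rw [hu0] at ha'
    rw [hu0'] at hb'
    have ha0' : (if i then (1:ℝ) / 2 - 0 else 1 / 2 + 0) * (π00 * a 0 + π10 * b 0) = (c / 2) * p0 := by
      rw [hu0, ha0, hb0]; linear_combination (1/2 : ℝ) * c * hst0
    have hb0' : (if i then (1:ℝ) / 2 + 0 else 1 / 2 - 0) * (π01 * a 0 + π11 * b 0) = (c / 2) * p1 := by
      rw [hu0', ha0, hb0]; linear_combination (1/2 : ℝ) * c * hst1
    obtain ⟨Da, Db, hDa, hDb, hsum⟩ := ih
      (fun δ => (if i then 1 / 2 - δ else 1 / 2 + δ) * (π00 * a δ + π10 * b δ))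
      (fun δ => (if i then 1 / 2 + δ else 1 / 2 - δ) * (π01 * a δ + π11 * b δ))
      _ _ (c / 2) ha' hb' ha0' hb0'
    refine ⟨Da, Db, ?_, ?_, ?_⟩
    · simpa using hDa
    · simpa using hDb
    · rw [hsum, ha0, hb0]
      simp only [List.length_cons, List.map_cons, List.sum_cons, pow_succ]
      have hs2 : s * s = 1 := by cases i <;> simp [hs]
      linear_combination ((1/2:ℝ)^t.length * s * c) * hst0 - ((1/2:ℝ)^t.length * s * c) * hst1
        + ((1/2:ℝ)^t.length * (1/2) * da) * hrow0 + ((1/2:ℝ)^t.length * (1/2) * db) * hrow1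

/-- Appendix E: first derivative of word probabilities at the low-SNR point `δ = 0`:
`d/dδ p_Z^δ(z_1⋯z_n)|_{δ=0} = (1/2)^{n−1} ∑_{i=1}^n (p_X(z_i) − p_X(1−z_i))`. -/
theorem deriv_word_probability_at_half (π00 π01 π10 π11 : ℝ)
    (h00 : 0 < π00) (h00' : π00 < 1) (h01 : 0 < π01) (h01' : π01 < 1)
    (h10 : 0 < π10) (h10' : π10 < 1) (h11 : 0 < π11) (h11' : π11 < 1)
    (hrow0 : π00 + π01 = 1) (hrow1 : π10 + π11 = 1) :
    ∀ n : ℕ, 1 ≤ n → ∀ w : Fin n → Bool,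
      deriv (fun δ => pZ π00 π01 π10 π11 δ (List.ofFn w)) 0 =
        (1 / 2 : ℝ) ^ (n - 1) * ∑ i : Fin n, (pX π01 π10 (w i) - pX π01 π10 (!w i)) := by
  intro n hn w
  set p0 : ℝ := π10 / (π01 + π10) with hp0
  set p1 : ℝ := π01 / (π01 + π10) with hp1
  have hden : π01 + π10 ≠ 0 := by positivity
  have hst0 : π00 * p0 + π10 * p1 = p0 := by
    rw [hp0, hp1]; field_simp; linear_combination hrow0
  have hst1 : π01 * p0 + π11 * p1 = p1 := by
    rw [hp0, hp1]; field_simp; linear_combination hrow1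
  obtain ⟨Da, Db, hDa, hDb, hsum⟩ := key π00 π01 π10 π11 p0 p1 hrow0 hrow1 hst0 hst1
    (List.ofFn w) (fun _ => p0) (fun _ => p1) 0 0 1
    (hasDerivAt_const 0 p0) (hasDerivAt_const 0 p1) (by ring) (by ring)
  have hder : HasDerivAt (fun δ => pZ π00 π01 π10 π11 δ (List.ofFn w)) (Da + Db) 0 := by
    simp only [pZ]
    exact hDa.add hDb
  rw [hder.deriv, hsum]
  obtain ⟨m, rfl⟩ := Nat.exists_eq_add_of_le hn
  have hmap : ((List.ofFn w).map (fun i => if i then (-1 : ℝ) else 1)).sum =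
      ∑ i : Fin (1 + m), (if w i then (-1 : ℝ) else 1) := by
    rw [List.map_ofFn, List.sum_ofFn]; rfl
  have hpt : ∀ i : Fin (1 + m), pX π01 π10 (w i) - pX π01 π10 (!w i) =
      (if w i then (-1 : ℝ) else 1) * (p0 - p1) := by
    intro i; cases h : w i <;> simp [pX, hp0, hp1] <;> ring
  rw [hmap, Finset.sum_congr rfl (fun i _ => hpt i), ← Finset.sum_mul,
    List.length_ofFn]
  have h1m : 1 + m - 1 = m := by omega
  rw [h1m, pow_add]
  ring
end

section
/- Second derivative of the block entropy at the low-SNR point (Appendix E): define R_n(δ) = ∑_{(z_1,…,z_n)∈{0,1}^n} p_Z^δ(z_1⋯z_n) log p_Z^δ(z_1⋯z_n). Then for every n ≥ 1, d²R_n/dδ² |_{δ=0} = 4n ( p_X(0) − p_X(1) )² = 4n ( (π_10 − π_01)/(π_10 + π_01) )². -/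
/-! At `δ = 0` the channel output is pure noise: by stationarity of `p_X` every word of length
`n` has probability `2⁻ⁿ`. Differentiating `∑ p log p` twice, the terms carrying `p''` cancel
because `∑_w p_Z^δ(w) = 1` for every `δ`, which leaves `2ⁿ ∑_w p'(w)²`. Linearising the forward
recursion gives `p'(w) = 2 (p_X(0) - p_X(1)) 2⁻ⁿ ∑_k s(z_k)` with `s(0) = 1`, `s(1) = -1`, and
`∑_w (∑_k s(z_k))² = n 2ⁿ` since distinct letters contribute orthogonal signs. -/

open Real Finset Filter

theorem iteratedDeriv_two_mul_log {g : ℝ → ℝ} {x : ℝ} (hg : ContDiff ℝ 2 g) (hx : g x ≠ 0) :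
    iteratedDeriv 2 (fun y => g y * log (g y)) x =
      iteratedDeriv 2 g x * (log (g x) + 1) + deriv g x ^ 2 / g x := by
  have hg' : Differentiable ℝ g := hg.differentiable two_ne_zero
  have hdg : Differentiable ℝ (deriv g) :=
    (contDiff_succ_iff_deriv.mp hg).2.2.differentiable one_ne_zero
  have hderiv_near :
      deriv (fun y => g y * log (g y)) =ᶠ[nhds x] fun y => deriv g y * (log (g y) + 1) := by
    filter_upwards [hg'.continuous.continuousAt.eventually_ne hx] with y hy
    have := (hg' y).hasDerivAt.fun_mul ((hg' y).hasDerivAt.log hy)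
    rw [this.deriv]
    field_simp
  have hsecond : HasDerivAt (fun y => deriv g y * (log (g y) + 1))
      (deriv (deriv g) x * (log (g x) + 1) + deriv g x * (deriv g x / g x)) x :=
    (hdg x).hasDerivAt.mul (((hg' x).hasDerivAt.log hx).add_const 1)
  simp only [iteratedDeriv_succ, iteratedDeriv_zero]
  rw [hderiv_near.deriv_eq, hsecond.deriv]
  ring

theorem iteratedDeriv_two_sum_mul_log {ι : Type*} [Fintype ι] {f : ι → ℝ → ℝ} {x c s : ℝ}
    (hf : ∀ i, ContDiff ℝ 2 (f i)) (hx : ∀ i, f i x = c) (hc : c ≠ 0)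
    (hsum : ∀ y, ∑ i, f i y = s) :
    iteratedDeriv 2 (fun y => ∑ i, f i y * log (f i y)) x = (∑ i, deriv (f i) x ^ 2) / c := by
  have hsum2 : ∑ i, iteratedDeriv 2 (f i) x = 0 := by
    rw [← iteratedDeriv_fun_sum fun i _ => (hf i).contDiffAt]
    simp [hsum, iteratedDeriv_const]
  rw [iteratedDeriv_fun_sum fun i _ => (hf i).contDiffAt.mul ((hf i).contDiffAt.log (hx i ▸ hc))]
  simp only [iteratedDeriv_two_mul_log (hf _) (hx _ ▸ hc), hx]
  rw [sum_add_distrib, ← sum_mul, hsum2, ← sum_div]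
  ring

namespace HiddenMarkovBSC

/-- `p_E(z) = 1/2 + boolSign z * δ`. -/
def boolSign (b : Bool) : ℝ := if b then -1 else 1

def signSum (l : List Bool) : ℝ := (l.map boolSign).sum

theorem signSum_append_singleton (l : List Bool) (b : Bool) :
    signSum (l ++ [b]) = signSum l + boolSign b := by
  simp [signSum]

/-- The pair `(a_n, b_n)` of the forward recursion, so that `p_Z^δ = a_n + b_n`. -/
noncomputable def forward (π00 π01 π10 π11 δ : ℝ) (l : List Bool) : ℝ × ℝ :=
  l.foldl
    (fun ab i =>
      ((if i then 1 / 2 - δ else 1 / 2 + δ) * (π00 * ab.1 + π10 * ab.2),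
       (if i then 1 / 2 + δ else 1 / 2 - δ) * (π01 * ab.1 + π11 * ab.2)))
    (π10 / (π01 + π10), π01 / (π01 + π10))

variable {π00 π01 π10 π11 : ℝ}

theorem pZ_eq_forward (δ : ℝ) (l : List Bool) :
    pZ π00 π01 π10 π11 δ l = (forward π00 π01 π10 π11 δ l).1 + (forward π00 π01 π10 π11 δ l).2 :=
  rfl

theorem forward_nil (δ : ℝ) :
    forward π00 π01 π10 π11 δ [] = (pX π01 π10 false, pX π01 π10 true) :=
  rfl

theorem forward_append_singleton (δ : ℝ) (l : List Bool) (b : Bool) :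
    forward π00 π01 π10 π11 δ (l ++ [b]) =
      ((1 / 2 + boolSign b * δ) *
          (π00 * (forward π00 π01 π10 π11 δ l).1 + π10 * (forward π00 π01 π10 π11 δ l).2),
       (1 / 2 - boolSign b * δ) *
          (π01 * (forward π00 π01 π10 π11 δ l).1 + π11 * (forward π00 π01 π10 π11 δ l).2)) := by
  cases b <;>
    simp only [forward, List.foldl_append, List.foldl_cons, List.foldl_nil, boolSign, if_true,
      if_false, Bool.false_eq_true] <;> congr 1 <;> ring

theorem contDiff_forward {k : WithTop ℕ∞} (l : List Bool) :
    ContDiff ℝ k (fun δ => forward π00 π01 π10 π11 δ l) := by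
  induction l using List.reverseRecOn with
  | nil => exact contDiff_const
  | append_singleton l b ih =>
    simp only [forward_append_singleton]
    have hfst := contDiff_fst.comp ih
    have hsnd := contDiff_snd.comp ih
    simp only [Function.comp_def] at hfst hsnd
    fun_prop

theorem contDiff_pZ {k : WithTop ℕ∞} (l : List Bool) :
    ContDiff ℝ k (fun δ => pZ π00 π01 π10 π11 δ l) :=
  (contDiff_fst.comp (contDiff_forward l)).add (contDiff_snd.comp (contDiff_forward l))

theorem pX_false_stationary (hrow0 : π00 + π01 = 1) :
    π00 * pX π01 π10 false + π10 * pX π01 π10 true = pX π01 π10 false := by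
  simp only [pX, Bool.false_eq_true, if_false, if_true]
  rw [← mul_div_assoc, ← mul_div_assoc, ← add_div]
  linear_combination π10 / (π01 + π10) * hrow0

theorem pX_true_stationary (hrow1 : π10 + π11 = 1) :
    π01 * pX π01 π10 false + π11 * pX π01 π10 true = pX π01 π10 true := by
  simp only [pX, Bool.false_eq_true, if_false, if_true]
  rw [← mul_div_assoc, ← mul_div_assoc, ← add_div]
  linear_combination π01 / (π01 + π10) * hrow1

theorem pX_false_add_pX_true (hs : π01 + π10 ≠ 0) : pX π01 π10 false + pX π01 π10 true = 1 := by
  simp only [pX, Bool.false_eq_true, if_false, if_true]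
  field_simp
  ring

theorem forward_zero (hrow0 : π00 + π01 = 1) (hrow1 : π10 + π11 = 1) (l : List Bool) :
    forward π00 π01 π10 π11 0 l =
      ((1 / 2) ^ l.length * pX π01 π10 false, (1 / 2) ^ l.length * pX π01 π10 true) := by
  induction l using List.reverseRecOn with
  | nil => simp [forward_nil]
  | append_singleton l b ih =>
    rw [forward_append_singleton, ih, List.length_append, List.length_singleton, pow_succ]
    refine Prod.ext ?_ ?_
    · linear_combination (1 / 2) ^ l.length / 2 * pX_false_stationary (π10 := π10) hrow0
    · linear_combination (1 / 2) ^ l.length / 2 * pX_true_stationary (π01 := π01) hrow1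

theorem pZ_zero (hrow0 : π00 + π01 = 1) (hrow1 : π10 + π11 = 1) (hs : π01 + π10 ≠ 0)
    (l : List Bool) : pZ π00 π01 π10 π11 0 l = (1 / 2) ^ l.length := by
  rw [pZ_eq_forward, forward_zero hrow0 hrow1, ← mul_add, pX_false_add_pX_true hs, mul_one]

theorem deriv_forward_zero (hrow0 : π00 + π01 = 1) (hrow1 : π10 + π11 = 1) (l : List Bool) :
    deriv (fun δ => (forward π00 π01 π10 π11 δ l).1) 0 +
        deriv (fun δ => (forward π00 π01 π10 π11 δ l).2) 0 =
      2 * (pX π01 π10 false - pX π01 π10 true) * (1 / 2) ^ l.length * signSum l := by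
  induction l using List.reverseRecOn with
  | nil => simp [forward_nil, signSum]
  | append_singleton l b ih =>
    have hl : Differentiable ℝ (fun δ => forward π00 π01 π10 π11 δ l) :=
      (contDiff_forward (k := 1) l).differentiable one_ne_zero
    have ha := (hl.fst 0).hasDerivAt
    have hb := (hl.snd 0).hasDerivAt
    have hsign : HasDerivAt (fun δ : ℝ => boolSign b * δ) (boolSign b) 0 := by
      simpa using (hasDerivAt_id (0 : ℝ)).const_mul (boolSign b)
    have hfst := (hsign.const_add (1 / 2)).fun_mul ((ha.const_mul π00).fun_add (hb.const_mul π10))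
    have hsnd := (hsign.const_sub (1 / 2)).fun_mul ((ha.const_mul π01).fun_add (hb.const_mul π11))
    simp only [forward_append_singleton]
    rw [hfst.deriv, hsnd.deriv, forward_zero hrow0 hrow1, signSum_append_singleton,
      List.length_append, List.length_singleton, pow_succ]
    linear_combination (1 / 2) ^ l.length * boolSign b *
        (pX_false_stationary (π10 := π10) hrow0 - pX_true_stationary (π01 := π01) hrow1) +
      ih / 2 + deriv (fun δ => (forward π00 π01 π10 π11 δ l).1) 0 / 2 * hrow0 +
      deriv (fun δ => (forward π00 π01 π10 π11 δ l).2) 0 / 2 * hrow1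

theorem deriv_pZ_zero (hrow0 : π00 + π01 = 1) (hrow1 : π10 + π11 = 1) (l : List Bool) :
    deriv (fun δ => pZ π00 π01 π10 π11 δ l) 0 =
      2 * (pX π01 π10 false - pX π01 π10 true) * (1 / 2) ^ l.length * signSum l := by
  have hl : Differentiable ℝ (fun δ => forward π00 π01 π10 π11 δ l) :=
    (contDiff_forward (k := 1) l).differentiable one_ne_zero
  simp only [pZ_eq_forward]
  rw [deriv_fun_add (hl.fst 0) (hl.snd 0), deriv_forward_zero hrow0 hrow1]

theorem sum_ofFn_succ {M : Type*} [AddCommMonoid M] (g : List Bool → M) (n : ℕ) :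
    ∑ w : Fin (n + 1) → Bool, g (List.ofFn w) =
      ∑ w : Fin n → Bool, (g (List.ofFn w ++ [false]) + g (List.ofFn w ++ [true])) := by
  rw [← (Fin.snocEquiv fun _ => Bool).sum_comp, Fintype.sum_prod_type_right]
  refine sum_congr rfl fun w _ => ?_
  simp only [Fintype.sum_bool, Fin.snocEquiv_apply, List.ofFn_succ', Fin.snoc_castSucc,
    Fin.snoc_last, List.concat_eq_append, add_comm]

theorem pZ_append_false_add_pZ_append_true (hrow0 : π00 + π01 = 1) (hrow1 : π10 + π11 = 1)
    (δ : ℝ) (l : List Bool) :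
    pZ π00 π01 π10 π11 δ (l ++ [false]) + pZ π00 π01 π10 π11 δ (l ++ [true]) =
      pZ π00 π01 π10 π11 δ l := by
  simp only [pZ_eq_forward, forward_append_singleton, boolSign, Bool.false_eq_true, if_false,
    if_true]
  linear_combination (forward π00 π01 π10 π11 δ l).1 * hrow0 +
    (forward π00 π01 π10 π11 δ l).2 * hrow1

theorem sum_pZ (hrow0 : π00 + π01 = 1) (hrow1 : π10 + π11 = 1) (hs : π01 + π10 ≠ 0)
    (n : ℕ) (δ : ℝ) : ∑ w : Fin n → Bool, pZ π00 π01 π10 π11 δ (List.ofFn w) = 1 := by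
  induction n with
  | zero =>
    simpa [pZ_eq_forward, forward_nil] using pX_false_add_pX_true hs
  | succ n ih =>
    simpa only [sum_ofFn_succ, pZ_append_false_add_pZ_append_true hrow0 hrow1] using ih

theorem sum_signSum_sq (n : ℕ) :
    ∑ w : Fin n → Bool, signSum (List.ofFn w) ^ 2 = n * 2 ^ n := by
  induction n with
  | zero => simp [signSum]
  | succ n ih =>
    have hpair (l : List Bool) :
        signSum (l ++ [false]) ^ 2 + signSum (l ++ [true]) ^ 2 = 2 * signSum l ^ 2 + 2 := by
      simp only [signSum_append_singleton, boolSign, Bool.false_eq_true, if_false, if_true]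
      ring
    rw [sum_ofFn_succ (fun l => signSum l ^ 2)]
    simp only [hpair, sum_add_distrib, ← mul_sum, ih, sum_const, card_univ,
      Fintype.card_fun, Fintype.card_bool, Fintype.card_fin, nsmul_eq_mul]
    push_cast
    ring

end HiddenMarkovBSC

open HiddenMarkovBSC

theorem second_deriv_Rn_at_half_general (π00 π01 π10 π11 : ℝ)
    (h01 : 0 < π01) (h10 : 0 < π10)
    (hrow0 : π00 + π01 = 1) (hrow1 : π10 + π11 = 1) :
    ∀ n : ℕ, 1 ≤ n →
      iteratedDeriv 2 (Rn π00 π01 π10 π11 n) 0 =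
        4 * n * ((π10 - π01) / (π10 + π01)) ^ 2 := by
  intro n _
  have hs : π01 + π10 ≠ 0 := (add_pos h01 h10).ne'
  have hRn := iteratedDeriv_two_sum_mul_log
    (f := fun (w : Fin n → Bool) δ => pZ π00 π01 π10 π11 δ (List.ofFn w)) (x := 0)
    (fun w => contDiff_pZ _) (fun w => by rw [pZ_zero hrow0 hrow1 hs, List.length_ofFn])
    (by positivity) (sum_pZ hrow0 hrow1 hs n)
  unfold Rn
  rw [hRn]
  simp only [deriv_pZ_zero hrow0 hrow1, List.length_ofFn, mul_pow, ← mul_sum,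
    sum_signSum_sq, pX, Bool.false_eq_true, ↓reduceIte, one_div, inv_pow]
  field_simp
  ring

/-- Appendix E: second derivative of the block entropy sum at the low-SNR point:
`d²R_n/dδ²|_{δ=0} = 4n((π_10 − π_01)/(π_10 + π_01))² = 4n(p_X(0) − p_X(1))²`. -/
theorem second_deriv_Rn_at_half (π00 π01 π10 π11 : ℝ)
    (h00 : 0 < π00) (h00' : π00 < 1) (h01 : 0 < π01) (h01' : π01 < 1)
    (h10 : 0 < π10) (h10' : π10 < 1) (h11 : 0 < π11) (h11' : π11 < 1)
    (hrow0 : π00 + π01 = 1) (hrow1 : π10 + π11 = 1) :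
    ∀ n : ℕ, 1 ≤ n →
      iteratedDeriv 2 (Rn π00 π01 π10 π11 n) 0 =
        4 * n * ((π10 - π01) / (π10 + π01)) ^ 2 :=
  second_deriv_Rn_at_half_general π00 π01 π10 π11 h01 h10 hrow0 hrow1
end
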